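/- arXiv:1912.02467 — 10 statements merged into one kernel-verified Lean document; each statement's English description precedes it below -/
import Mathlib

section
/- The star chromatic index of the complete bipartite graph K_{2,d} for d ≥ 3 equals 2d − ⌊d/2⌋. -/
open SimpleGraph

/-- A star edge coloring: a proper edge coloring with no 2-colored path or cycle
on four edges. For proper colorings, this is equivalent to requiring that every
walk of length 4 with pairwise distinct edges sees at least 3 colors. -/
def IsStarEdgeColoring {V β : Type*} [DecidableEq β] (G : SimpleGraph V)
    (c : Sym2 V → β) : Prop :=
  (∀ ⦃e₁⦄, e₁ ∈ G.edgeSet → ∀ ⦃e₂⦄, e₂ ∈ G.edgeSet → e₁ ≠ e₂ →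
      (∃ v, v ∈ e₁ ∧ v ∈ e₂) → c e₁ ≠ c e₂) ∧
  ∀ (u v : V) (p : G.Walk u v), p.length = 4 → p.edges.Nodup →
    3 ≤ (p.edges.map c).toFinset.card

/-- The star chromatic index: the least `n` such that `G` has a star edge
coloring with colors in `Fin n`. -/
noncomputable def starChromaticIndex {V : Type*} (G : SimpleGraph V) : ℕ :=
  sInf {n | ∃ c : Sym2 V → Fin n, IsStarEdgeColoring G c}


lemma three_le_card {β : Type*} [DecidableEq β] {l : List β} {a b c : β}
    (ha : a ∈ l) (hb : b ∈ l) (hc : c ∈ l) (hab : a ≠ b) (hac : a ≠ c) (hbc : b ≠ c) :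
    3 ≤ l.toFinset.card := by
  have hsub : ({a, b, c} : Finset β) ⊆ l.toFinset := by
    intro x hx
    simp only [Finset.mem_insert, Finset.mem_singleton] at hx
    rcases hx with rfl | rfl | rfl <;> simpa using ‹_ ∈ l›
  have h3 : ({a, b, c} : Finset β).card = 3 := by
    rw [Finset.card_insert_of_notMem (by simp [hab, hac]),
        Finset.card_insert_of_notMem (by simp [hbc]), Finset.card_singleton]
  calc 3 = ({a,b,c} : Finset β).card := h3.symm
    _ ≤ _ := Finset.card_le_card hsub

private def gfun (d : ℕ) : (Fin 2 ⊕ Fin d) → (Fin 2 ⊕ Fin d) → ℕ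
  | Sum.inl p, Sum.inr i => i.1 + i.1 / 2 + p.1
  | Sum.inr i, Sum.inl p => i.1 + i.1 / 2 + p.1
  | _, _ => 0

private lemma gfun_symm (d : ℕ) : ∀ a b, gfun d a b = gfun d b a := by
  rintro (p | i) (q | j) <;> rfl

private noncomputable def cc (d : ℕ) (hd : 3 ≤ d) : Sym2 (Fin 2 ⊕ Fin d) → Fin (2 * d - d / 2) :=
  fun e => ⟨Sym2.lift ⟨gfun d, gfun_symm d⟩ e % (2 * d - d / 2), Nat.mod_lt _ (by omega)⟩

private lemma cc_apply (d : ℕ) (hd : 3 ≤ d) (p : Fin 2) (i : Fin d) :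
    (cc d hd s(Sum.inl p, Sum.inr i)).1 = i.1 + i.1 / 2 + p.1 := by
  show (Sym2.lift ⟨gfun d, gfun_symm d⟩ s(Sum.inl p, Sum.inr i)) % (2 * d - d / 2) = _
  rw [Sym2.lift_mk]
  show (i.1 + i.1 / 2 + p.1) % (2 * d - d / 2) = _
  have hi := i.2
  have hp := p.2
  exact Nat.mod_eq_of_lt (by omega)

private lemma cc_ne (d : ℕ) (hd : 3 ≤ d) {p q : Fin 2} {i j : Fin d}
    (h : i.1 + i.1 / 2 + p.1 ≠ j.1 + j.1 / 2 + q.1) :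
    cc d hd s(Sum.inl p, Sum.inr i) ≠ cc d hd s(Sum.inl q, Sum.inr j) := by
  intro he
  exact h (by rw [← cc_apply d hd p i, ← cc_apply d hd q j, he])

private lemma walk_case_A (d : ℕ) (hd : 3 ≤ d) (x y z : Fin d) (p q : Fin 2)
    (hxy : x ≠ y) (hyz : y ≠ z) (hpq : p ≠ q) :
    3 ≤ (List.map (cc d hd)
      [s(Sum.inl p, Sum.inr x), s(Sum.inl p, Sum.inr y),
       s(Sum.inl q, Sum.inr y), s(Sum.inl q, Sum.inr z)]).toFinset.card := by
  have hx := x.2; have hy := y.2; have hz := z.2; have hp := p.2; have hq := q.2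
  have hxy' : x.1 ≠ y.1 := fun h => hxy (Fin.ext h)
  have hyz' : y.1 ≠ z.1 := fun h => hyz (Fin.ext h)
  have hpq' : p.1 ≠ q.1 := fun h => hpq (Fin.ext h)
  by_cases hae : x.1 + x.1 / 2 + p.1 = y.1 + y.1 / 2 + q.1
  · exact three_le_card (a := cc d hd s(Sum.inl p, Sum.inr y))
      (b := cc d hd s(Sum.inl q, Sum.inr y)) (c := cc d hd s(Sum.inl q, Sum.inr z))
      (by simp) (by simp) (by simp)
      (cc_ne d hd (by omega)) (cc_ne d hd (by omega)) (cc_ne d hd (by omega))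
  · exact three_le_card (a := cc d hd s(Sum.inl p, Sum.inr x))
      (b := cc d hd s(Sum.inl p, Sum.inr y)) (c := cc d hd s(Sum.inl q, Sum.inr y))
      (by simp) (by simp) (by simp)
      (cc_ne d hd (by omega)) (cc_ne d hd (by omega)) (cc_ne d hd (by omega))

private lemma walk_case_B (d : ℕ) (hd : 3 ≤ d) (x y : Fin d) (p q r : Fin 2)
    (hpq : p ≠ q) (hxy : x ≠ y) (hqr : q ≠ r) :
    3 ≤ (List.map (cc d hd)
      [s(Sum.inl p, Sum.inr x), s(Sum.inl q, Sum.inr x),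
       s(Sum.inl q, Sum.inr y), s(Sum.inl r, Sum.inr y)]).toFinset.card := by
  have hx := x.2; have hy := y.2; have hp := p.2; have hq := q.2; have hr := r.2
  have hxy' : x.1 ≠ y.1 := fun h => hxy (Fin.ext h)
  have hpq' : p.1 ≠ q.1 := fun h => hpq (Fin.ext h)
  have hqr' : q.1 ≠ r.1 := fun h => hqr (Fin.ext h)
  by_cases hae : x.1 + x.1 / 2 + p.1 = y.1 + y.1 / 2 + q.1
  · exact three_le_card (a := cc d hd s(Sum.inl q, Sum.inr x))
      (b := cc d hd s(Sum.inl q, Sum.inr y)) (c := cc d hd s(Sum.inl r, Sum.inr y))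
      (by simp) (by simp) (by simp)
      (cc_ne d hd (by omega)) (cc_ne d hd (by omega)) (cc_ne d hd (by omega))
  · exact three_le_card (a := cc d hd s(Sum.inl p, Sum.inr x))
      (b := cc d hd s(Sum.inl q, Sum.inr x)) (c := cc d hd s(Sum.inl q, Sum.inr y))
      (by simp) (by simp) (by simp)
      (cc_ne d hd (by omega)) (cc_ne d hd (by omega)) (cc_ne d hd (by omega))

private lemma edge_cases {d : ℕ} {e : Sym2 (Fin 2 ⊕ Fin d)}
    (h : e ∈ (completeBipartiteGraph (Fin 2) (Fin d)).edgeSet) :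
    ∃ p i, e = s(Sum.inl p, Sum.inr i) := by
  induction e using Sym2.ind with | _ a b => ?_
  rw [SimpleGraph.mem_edgeSet] at h
  rcases a with p | i <;> rcases b with q | j
  · exact absurd h (by simp)
  · exact ⟨p, j, rfl⟩
  · exact ⟨q, i, Sym2.eq_swap⟩
  · exact absurd h (by simp)


private lemma adj_inl {d : ℕ} {p : Fin 2} {b : Fin 2 ⊕ Fin d}
    (h : (completeBipartiteGraph (Fin 2) (Fin d)).Adj (Sum.inl p) b) : ∃ i, b = Sum.inr i := by
  rcases b with q | i
  · exact absurd h (by simp)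
  · exact ⟨i, rfl⟩

private lemma adj_inr {d : ℕ} {i : Fin d} {b : Fin 2 ⊕ Fin d}
    (h : (completeBipartiteGraph (Fin 2) (Fin d)).Adj (Sum.inr i) b) : ∃ p, b = Sum.inl p := by
  rcases b with q | j
  · exact ⟨q, rfl⟩
  · exact absurd h (by simp)

private lemma upper (d : ℕ) (hd : 3 ≤ d) :
    IsStarEdgeColoring (completeBipartiteGraph (Fin 2) (Fin d)) (cc d hd) := by
  constructor
  · intro e₁ h₁ e₂ h₂ hne hshare
    obtain ⟨p, i, rfl⟩ := edge_cases h₁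
    obtain ⟨q, j, rfl⟩ := edge_cases h₂
    obtain ⟨w, hw1, hw2⟩ := hshare
    simp only [Sym2.mem_iff] at hw1 hw2
    have hkey : (p = q ∧ i ≠ j) ∨ (i = j ∧ p ≠ q) := by
      have hne' : ¬(p = q ∧ i = j) := by rintro ⟨rfl, rfl⟩; exact hne rfl
      rcases hw1 with rfl | rfl <;> rcases hw2 with h | h <;> simp_all <;> tauto
    have hi := i.2; have hj := j.2; have hp := p.2; have hq := q.2
    apply cc_ne
    rcases hkey with ⟨rfl, hij⟩ | ⟨rfl, hpq⟩
    · have : i.1 ≠ j.1 := fun h => hij (Fin.ext h)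
      omega
    · have : p.1 ≠ q.1 := fun h => hpq (Fin.ext h)
      omega
  · intro u v p hlen hnodup
    cases p with
    | nil => simp at hlen
    | cons h₁ p =>
      cases p with
      | nil => simp at hlen
      | cons h₂ p =>
        cases p with
        | nil => simp at hlen
        | cons h₃ p =>
          cases p with
          | nil => simp at hlen
          | cons h₄ p =>
            cases p with
            | cons h₅ p => simp at hlen
            | nil =>
              simp only [SimpleGraph.Walk.edges_cons, SimpleGraph.Walk.edges_nil] at hnodup ⊢
              clear hlen
              rcases u with pp | xx
              · obtain ⟨x, rfl⟩ := adj_inl h₁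
                obtain ⟨q, rfl⟩ := adj_inr h₂
                obtain ⟨y, rfl⟩ := adj_inl h₃
                obtain ⟨r, rfl⟩ := adj_inr h₄
                simp at hnodup
                rw [show s(Sum.inr x, Sum.inl q) = s(Sum.inl q, Sum.inr x) from Sym2.eq_swap,
                    show s(Sum.inr y, Sum.inl r) = s(Sum.inl r, Sum.inr y) from Sym2.eq_swap]
                exact walk_case_B d hd x y pp q r hnodup.1.1 hnodup.2.1.1 hnodup.2.2
              · obtain ⟨p', rfl⟩ := adj_inr h₁
                obtain ⟨y, rfl⟩ := adj_inl h₂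
                obtain ⟨q, rfl⟩ := adj_inr h₃
                obtain ⟨z, rfl⟩ := adj_inl h₄
                simp at hnodup
                rw [show s(Sum.inr xx, Sum.inl p') = s(Sum.inl p', Sum.inr xx) from Sym2.eq_swap,
                    show s(Sum.inr y, Sum.inl q) = s(Sum.inl q, Sum.inr y) from Sym2.eq_swap]
                exact walk_case_A d hd xx y z p' q hnodup.1.1 hnodup.2.2 hnodup.2.1.1

private lemma path_cond {d n : ℕ} {c : Sym2 (Fin 2 ⊕ Fin d) → Fin n}
    (h : IsStarEdgeColoring (completeBipartiteGraph (Fin 2) (Fin d)) c)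
    (i j k : Fin d) (hij : i ≠ j) (hjk : j ≠ k)
    (h1 : c s(Sum.inl 0, Sum.inr i) = c s(Sum.inl 1, Sum.inr j))
    (h2 : c s(Sum.inl 0, Sum.inr j) = c s(Sum.inl 1, Sum.inr k)) : False := by
  have a1 : (completeBipartiteGraph (Fin 2) (Fin d)).Adj (Sum.inr i) (Sum.inl 0) := by simp
  have a2 : (completeBipartiteGraph (Fin 2) (Fin d)).Adj (Sum.inl 0) (Sum.inr j) := by simp
  have a3 : (completeBipartiteGraph (Fin 2) (Fin d)).Adj (Sum.inr j) (Sum.inl 1) := by simp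
  have a4 : (completeBipartiteGraph (Fin 2) (Fin d)).Adj (Sum.inl 1) (Sum.inr k) := by simp
  let w : (completeBipartiteGraph (Fin 2) (Fin d)).Walk (Sum.inr i) (Sum.inr k) :=
    .cons a1 (.cons a2 (.cons a3 (.cons a4 .nil)))
  have hlen : w.length = 4 := rfl
  have hedges : w.edges = [s(Sum.inr i, Sum.inl 0), s(Sum.inl 0, Sum.inr j),
      s(Sum.inr j, Sum.inl 1), s(Sum.inl 1, Sum.inr k)] := rfl
  have hnd : w.edges.Nodup := by
    rw [hedges]
    simp [hij, hjk]
  have h3 := h.2 _ _ w hlen hnd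
  rw [hedges] at h3
  have e1 : c s(Sum.inr i, Sum.inl 0) = c s(Sum.inl 1, Sum.inr j) := by
    rw [Sym2.eq_swap]; exact h1
  have e3 : c s(Sum.inr j, Sum.inl 1) = c s(Sum.inl 1, Sum.inr j) := by rw [Sym2.eq_swap]
  have e4 : c s(Sum.inl 1, Sum.inr k) = c s(Sum.inl 0, Sum.inr j) := h2.symm
  rw [List.map_cons, List.map_cons, List.map_cons, List.map_cons, List.map_nil,
      e1, e3, e4] at h3
  have hsub : ([c s(Sum.inl 1, Sum.inr j), c s(Sum.inl 0, Sum.inr j),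
      c s(Sum.inl 1, Sum.inr j), c s(Sum.inl 0, Sum.inr j)] : List (Fin n)).toFinset
      ⊆ {c s(Sum.inl 1, Sum.inr j), c s(Sum.inl 0, Sum.inr j)} := by
    intro x hx
    simp at hx
    simp [hx]
  have hcard : ({c s(Sum.inl 1, Sum.inr j), c s(Sum.inl 0, Sum.inr j)} : Finset (Fin n)).card ≤ 2 :=
    (Finset.card_insert_le _ _).trans (by simp)
  have := (Finset.card_le_card hsub).trans hcard
  omega

private lemma lower {d n : ℕ} (hd : 3 ≤ d) (c : Sym2 (Fin 2 ⊕ Fin d) → Fin n)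
    (h : IsStarEdgeColoring (completeBipartiteGraph (Fin 2) (Fin d)) c) :
    2 * d - d / 2 ≤ n := by
  classical
  set c0 : Fin d → Fin n := fun i => c s(Sum.inl 0, Sum.inr i) with hc0def
  set c1 : Fin d → Fin n := fun i => c s(Sum.inl 1, Sum.inr i) with hc1def
  have hmem : ∀ (p : Fin 2) (i : Fin d),
      s(Sum.inl p, Sum.inr i) ∈ (completeBipartiteGraph (Fin 2) (Fin d)).edgeSet := by
    intro p i; simp
  have hinj0 : Function.Injective c0 := by
    intro i j hij
    by_contra hne
    exact h.1 (hmem 0 i) (hmem 0 j)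
      (by simp [Sym2.eq_iff]; tauto)
      ⟨Sum.inl 0, by simp, by simp⟩ hij
  have hinj1 : Function.Injective c1 := by
    intro i j hij
    by_contra hne
    exact h.1 (hmem 1 i) (hmem 1 j)
      (by simp [Sym2.eq_iff]; tauto)
      ⟨Sum.inl 1, by simp, by simp⟩ hij
  have hproper : ∀ i : Fin d, c0 i ≠ c1 i := by
    intro i
    exact h.1 (hmem 0 i) (hmem 1 i)
      (by simp [Sym2.eq_iff])
      ⟨Sum.inr i, by simp, by simp⟩
  set A : Finset (Fin n) := Finset.image c0 Finset.univ with hA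
  set B : Finset (Fin n) := Finset.image c1 Finset.univ with hB
  have cardA : A.card = d := by
    rw [hA, Finset.card_image_of_injective _ hinj0, Finset.card_univ, Fintype.card_fin]
  have cardB : B.card = d := by
    rw [hB, Finset.card_image_of_injective _ hinj1, Finset.card_univ, Fintype.card_fin]
  set T : Finset (Fin d) := Finset.univ.filter (fun j => c1 j ∈ A) with hT
  have himT : Finset.image c1 T = A ∩ B := by
    ext x
    simp only [Finset.mem_image, Finset.mem_inter, hT, Finset.mem_filter, Finset.mem_univ,
      true_and]
    constructor
    · rintro ⟨j, hj, rfl⟩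
      exact ⟨hj, by rw [hB]; exact Finset.mem_image_of_mem _ (Finset.mem_univ j)⟩
    · rintro ⟨hxA, hxB⟩
      rw [hB] at hxB
      obtain ⟨j, -, rfl⟩ := Finset.mem_image.mp hxB
      exact ⟨j, hxA, rfl⟩
  have cardT : T.card = (A ∩ B).card := by
    rw [← himT, Finset.card_image_of_injective _ hinj1]
  have himT0 : Finset.image c0 T ⊆ A \ B := by
    intro x hx
    obtain ⟨j, hj, rfl⟩ := Finset.mem_image.mp hx
    rw [hT, Finset.mem_filter] at hj
    obtain ⟨-, hjA⟩ := hj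
    rw [Finset.mem_sdiff]
    refine ⟨Finset.mem_image_of_mem _ (Finset.mem_univ j), ?_⟩
    intro hjB
    rw [hB] at hjB
    obtain ⟨k, -, hk⟩ := Finset.mem_image.mp hjB
    rw [hA] at hjA
    obtain ⟨i, -, hi⟩ := Finset.mem_image.mp hjA
    have hij : i ≠ j := by
      rintro rfl
      exact hproper i hi
    have hjk : j ≠ k := by
      rintro rfl
      exact hproper j hk.symm
    exact path_cond h i j k hij hjk hi hk.symm
  have step : (A ∩ B).card ≤ (A \ B).card := by
    calc (A ∩ B).card = T.card := cardT.symm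
      _ = (Finset.image c0 T).card := (Finset.card_image_of_injective _ hinj0).symm
      _ ≤ (A \ B).card := Finset.card_le_card himT0
  have h1 : (A \ B).card + (A ∩ B).card = A.card := Finset.card_sdiff_add_card_inter A B
  have h2 : (A ∪ B).card + (A ∩ B).card = A.card + B.card := Finset.card_union_add_card_inter A B
  have h3 : (A ∪ B).card ≤ n := by
    have := Finset.card_le_univ (A ∪ B)
    rwa [Fintype.card_fin] at this
  omega

theorem starChromaticIndex_K2d (d : ℕ) (hd : 3 ≤ d) :
    starChromaticIndex (completeBipartiteGraph (Fin 2) (Fin d)) = 2 * d - d / 2 := by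
  have hmem : (2 * d - d / 2) ∈ {n | ∃ c : Sym2 (Fin 2 ⊕ Fin d) → Fin n,
      IsStarEdgeColoring (completeBipartiteGraph (Fin 2) (Fin d)) c} :=
    ⟨cc d hd, upper d hd⟩
  refine le_antisymm (Nat.sInf_le hmem) (le_csInf ⟨_, hmem⟩ ?_)
  rintro n ⟨c, hc⟩
  exact lower hd c hc
end

section
/- In any star edge coloring of K_{2,d} with parts {x_1,x_2} and Y of size d ≥ 3, at most ⌊d/2⌋ colors appear both on an edge incident with x_1 and on an edge incident with x_2; consequently at least 2d − ⌊d/2⌋ colors are used. -/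
open SimpleGraph

theorem K2d_star_lower (d : ℕ) (hd : 3 ≤ d) (c : Sym2 (Fin 2 ⊕ Fin d) → ℕ)
    (hc : IsStarEdgeColoring (completeBipartiteGraph (Fin 2) (Fin d)) c) :
    ((Finset.univ.image fun y : Fin d => c s(Sum.inl 0, Sum.inr y)) ∩
        (Finset.univ.image fun y : Fin d => c s(Sum.inl 1, Sum.inr y))).card ≤ d / 2 ∧
    2 * d - d / 2 ≤
      ((Finset.univ.image fun y : Fin d => c s(Sum.inl 0, Sum.inr y)) ∪
        (Finset.univ.image fun y : Fin d => c s(Sum.inl 1, Sum.inr y))).card := by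
  classical
  set G := completeBipartiteGraph (Fin 2) (Fin d) with hG
  set f : Fin d → ℕ := fun y => c s(Sum.inl 0, Sum.inr y) with hf
  set g : Fin d → ℕ := fun y => c s(Sum.inl 1, Sum.inr y) with hg
  obtain ⟨hprop, hstar⟩ := hc
  -- properness consequences
  have hmem : ∀ (i : Fin 2) (y : Fin d),
      s((Sum.inl i : Fin 2 ⊕ Fin d), Sum.inr y) ∈ G.edgeSet := by
    intro i y; simp [hG]
  have finj : Function.Injective f := by
    intro y y' h
    by_contra hne
    exact hprop (hmem 0 y) (hmem 0 y')
      (by simp [Sym2.eq_iff]; exact fun h' => (hne h').elim)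
      ⟨Sum.inl 0, by simp⟩ h
  have ginj : Function.Injective g := by
    intro y y' h
    by_contra hne
    exact hprop (hmem 1 y) (hmem 1 y')
      (by simp [Sym2.eq_iff]; exact fun h' => (hne h').elim)
      ⟨Sum.inl 1, by simp⟩ h
  have hfg : ∀ y : Fin d, f y ≠ g y := by
    intro y
    exact hprop (hmem 0 y) (hmem 1 y)
      (by simp [Sym2.eq_iff, Fin.ext_iff]) ⟨Sum.inr y, by simp⟩
  -- key lemma from the star condition
  have key : ∀ y z w : Fin d, z ≠ y → w ≠ y → f y = g z → g y = f w → False := by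
    intro y z w hzy hwy h1 h2
    have a1 : G.Adj (Sum.inr z) (Sum.inl 1) := by simp [hG]
    have a2 : G.Adj (Sum.inl 1) (Sum.inr y) := by simp [hG]
    have a3 : G.Adj (Sum.inr y) (Sum.inl 0) := by simp [hG]
    have a4 : G.Adj (Sum.inl 0) (Sum.inr w) := by simp [hG]
    set p : G.Walk (Sum.inr z) (Sum.inr w) :=
      .cons a1 (.cons a2 (.cons a3 (.cons a4 .nil))) with hp
    have hlen : p.length = 4 := rfl
    have hedges : p.edges = [s(Sum.inr z, Sum.inl 1), s(Sum.inl 1, Sum.inr y),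
        s(Sum.inr y, Sum.inl 0), s(Sum.inl 0, Sum.inr w)] := rfl
    have hnodup : p.edges.Nodup := by
      rw [hedges]
      simp [Sym2.eq_iff, hzy, hwy, Ne.symm hzy, Ne.symm hwy, Fin.ext_iff]
    have h3 := hstar _ _ p hlen hnodup
    rw [hedges] at h3
    have e1 : c s(Sum.inr z, Sum.inl 1) = g z := by rw [Sym2.eq_swap]
    have e2 : c s(Sum.inl 1, Sum.inr y) = g y := rfl
    have e3 : c s(Sum.inr y, Sum.inl 0) = f y := by rw [Sym2.eq_swap]
    have e4 : c s(Sum.inl 0, Sum.inr w) = f w := rfl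
    simp only [List.map_cons, List.map_nil, e1, e2, e3, e4, ← h1, h2] at h3
    have : ({f y, f w} : Finset ℕ).card ≤ 2 :=
      le_trans (Finset.card_insert_le _ _) (by simp)
    have hsub : ([f y, f w, f y, f w] : List ℕ).toFinset ⊆ {f y, f w} := by
      intro a ha
      simp only [List.mem_toFinset, List.mem_cons, List.not_mem_nil, or_false] at ha
      simp only [Finset.mem_insert, Finset.mem_singleton]
      tauto
    have := Finset.card_le_card hsub
    omega
  -- choice functions
  set A := Finset.univ.image f with hA
  set B := Finset.univ.image g with hB
  have hd0 : (0 : ℕ) < d := by omega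
  set yf : ℕ → Fin d := fun t => if h : ∃ y, f y = t then h.choose else ⟨0, hd0⟩ with hyf
  set zf : ℕ → Fin d := fun t => if h : ∃ y, g y = t then h.choose else ⟨0, hd0⟩ with hzf
  have hyfs : ∀ t ∈ A, f (yf t) = t := by
    intro t ht
    obtain ⟨y, -, hy⟩ := Finset.mem_image.mp ht
    have h : ∃ y, f y = t := ⟨y, hy⟩
    simp only [hyf, dif_pos h]
    exact h.choose_spec
  have hzfs : ∀ t ∈ B, g (zf t) = t := by
    intro t ht
    obtain ⟨y, -, hy⟩ := Finset.mem_image.mp ht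
    have h : ∃ y, g y = t := ⟨y, hy⟩
    simp only [hzf, dif_pos h]
    exact h.choose_spec
  set Φ : ℕ → Finset (Fin d) := fun t => {yf t, zf t} with hΦ
  have hyzne : ∀ t ∈ A ∩ B, yf t ≠ zf t := by
    intro t ht heq
    have h1 := hyfs t (Finset.mem_inter.mp ht).1
    have h2 := hzfs t (Finset.mem_inter.mp ht).2
    exact hfg (yf t) (by rw [h1, heq, h2])
  have hcard2 : ∀ t ∈ A ∩ B, (Φ t).card = 2 := by
    intro t ht
    simp [hΦ, Finset.card_insert_of_notMem, hyzne t ht]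
  have hdisj : ∀ t ∈ A ∩ B, ∀ s ∈ A ∩ B, t ≠ s → Disjoint (Φ t) (Φ s) := by
    intro t ht s hs hts
    have hta := (Finset.mem_inter.mp ht).1
    have htb := (Finset.mem_inter.mp ht).2
    have hsa := (Finset.mem_inter.mp hs).1
    have hsb := (Finset.mem_inter.mp hs).2
    rw [Finset.disjoint_left]
    intro a hat has
    simp only [hΦ, Finset.mem_insert, Finset.mem_singleton] at hat has
    have hyy : yf t ≠ yf s := fun h => hts (by rw [← hyfs t hta, h, hyfs s hsa])
    have hzz : zf t ≠ zf s := fun h => hts (by rw [← hzfs t htb, h, hzfs s hsb])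
    rcases hat with rfl | rfl <;> rcases has with h | h
    · exact hyy h
    · -- yf t = zf s : vertex v = yf t has out-arc t and in-arc s
      refine key (yf t) (zf t) (yf s) (fun hh => hyzne t ht hh.symm)
        (fun hh => hyy hh.symm) ?_ ?_
      · rw [hyfs t hta, hzfs t htb]
      · rw [hyfs s hsa, h, hzfs s hsb]
    · -- zf t = yf s
      refine key (yf s) (zf s) (yf t) (fun hh => hyzne s hs hh.symm)
        (fun hh => hyy hh) ?_ ?_
      · rw [hyfs s hsa, hzfs s hsb]
      · rw [hyfs t hta, ← h, hzfs t htb]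
    · exact hzz h
  have hsum : 2 * (A ∩ B).card ≤ d := by
    have h1 : ((A ∩ B).biUnion Φ).card = ∑ t ∈ A ∩ B, (Φ t).card :=
      Finset.card_biUnion hdisj
    have h2 : ∑ t ∈ A ∩ B, (Φ t).card = 2 * (A ∩ B).card := by
      rw [Finset.sum_congr rfl hcard2]
      simp [mul_comm]
    have h3 : ((A ∩ B).biUnion Φ).card ≤ d := by
      calc ((A ∩ B).biUnion Φ).card ≤ (Finset.univ : Finset (Fin d)).card :=
            Finset.card_le_card (Finset.subset_univ _)
        _ = d := by simp
    omega
  have hAcard : A.card = d := by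
    rw [hA, Finset.card_image_of_injective _ finj]; simp
  have hBcard : B.card = d := by
    rw [hB, Finset.card_image_of_injective _ ginj]; simp
  have hunion := Finset.card_union_add_card_inter A B
  constructor
  · omega
  · omega
end

section
/- For d ≥ 5, the star chromatic index of the complete bipartite graph K_{3,d} equals 3⌈d/2⌉. -/
open SimpleGraph

/-!
Lower bound. At each vertex `a` of the small side the `d` edges carry distinct colours; call
this set `A a`. If the edges `a u` and `b v` have the same colour, the colour of `a v` does not
occur at `b ≠ a`, for otherwise `u a v b w` is a bicoloured path. So the vertices `v` whose edge to
`b` has a colour occurring at `a`, and those whose edge to `a` has a colour occurring at `b`,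
form two disjoint sets of size `|A a ∩ A b|`, whence `|A a ∩ A b| ≤ ⌊d/2⌋`, and
inclusion–exclusion leaves at least `3d - 3⌊d/2⌋ = 3⌈d/2⌉` colours.

Upper bound. With `m = ⌈d/2⌉`, write `v = 2j + s` with `s < 2` and colour the edge `a v` by
`(j + ⌊a/2⌋ mod m, a + s mod 3)`. The residues alone rule out bicoloured paths `u a v b w`. On a
bicoloured path `a u b v x` the residues force either `a = b = x`, and then `u = v`, or `a, b, x`
distinct; but then the shifts `⌊a/2⌋, ⌊b/2⌋, ⌊x/2⌋`, a permutation of `0, 0, 1`, would form an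
arithmetic progression modulo `m`, impossible for `m ≥ 3`.
-/

open Finset Function

theorem Finset.three_le_card_insert_iff {α : Type*} [DecidableEq α] {x y z w : α}
    (hxy : x ≠ y) (hyz : y ≠ z) (hzw : z ≠ w) :
    3 ≤ #{x, y, z, w} ↔ ¬(x = z ∧ y = w) := by
  constructor
  · rintro h ⟨rfl, rfl⟩
    have : #{x, y, x, y} ≤ 2 := by
      rw [show ({x, y, x, y} : Finset α) = {x, y} by ext; simp]
      exact card_le_two
    omega
  · intro h
    by_cases hxz : x = z
    · subst hxz
      have hyw : y ≠ w := fun h' => h ⟨rfl, h'⟩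
      rw [show ({x, y, x, w} : Finset α) = {x, y, w} by ext; simp; tauto,
        card_eq_three.2 ⟨x, y, w, hxy, hzw, hyw, rfl⟩]
    · calc 3 = #{x, y, z} := (card_eq_three.2 ⟨x, y, z, hxy, hxz, hyz, rfl⟩).symm
        _ ≤ #{x, y, z, w} := card_le_card (by intro t; simp; tauto)

theorem Finset.two_mul_card_image_inter_image_le {ι α : Type*} [Fintype ι] [DecidableEq α]
    {f g : ι → α} (hf : Injective f) (hg : Injective g)
    (h : ∀ ⦃u v⦄, f u = g v → ∀ w, f v ≠ g w) :
    2 * #(univ.image f ∩ univ.image g) ≤ Fintype.card ι := by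
  classical
  set I := univ.image f ∩ univ.image g
  set S := univ.filter fun v => g v ∈ I
  set T := univ.filter fun v => f v ∈ I
  have hS : S.image g = I := by ext; simp [S, I]; grind
  have hT : T.image f = I := by ext; simp [T, I]; grind
  have hST : Disjoint S T := by
    simp only [disjoint_left, S, T, I, mem_filter, mem_inter, mem_image, mem_univ, true_and]
    rintro v ⟨⟨u, hu⟩, -⟩ ⟨-, w, hw⟩
    exact h hu w hw.symm
  calc 2 * #I = #S + #T := by
        rw [two_mul, ← card_image_of_injective S hg, hS, ← card_image_of_injective T hf, hT]
    _ = #(S ∪ T) := (card_union_of_disjoint hST).symm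
    _ ≤ Fintype.card ι := card_le_univ _

theorem Finset.card_add_card_add_card_le {α : Type*} [DecidableEq α] (s t u : Finset α) :
    #s + #t + #u ≤ #(s ∪ t ∪ u) + #(s ∩ t) + #(s ∩ u) + #(t ∩ u) := by
  have hst := card_union_add_card_inter s t
  have hstu := card_union_add_card_inter (s ∪ t) u
  have hsub : #((s ∪ t) ∩ u) ≤ #(s ∩ u) + #(t ∩ u) := by
    rw [union_inter_distrib_right]; exact card_union_le _ _
  omega

theorem Nat.ModEq.add_eq_two_mul {m j j' p q r : ℕ} (hm : 3 ≤ m) (hp : p ≤ 1) (hq : q ≤ 1)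
    (hr : r ≤ 1) (h₁ : j + p ≡ j' + q [MOD m]) (h₂ : j + q ≡ j' + r [MOD m]) :
    p + r = 2 * q := by
  have h : p + r + (j + j') ≡ 2 * q + (j + j') [MOD m] := by
    convert h₁.add h₂.symm using 1 <;> ring
  refine (h.add_right_cancel' _).eq_of_abs_lt (abs_lt.2 ⟨?_, ?_⟩) <;> push_cast <;> omega

section EdgeColoring

variable {V β γ : Type*} {G : SimpleGraph V} {c : Sym2 V → β}

def IsProperEdgeColoring (G : SimpleGraph V) (c : Sym2 V → β) : Prop :=
  ∀ ⦃e₁⦄, e₁ ∈ G.edgeSet → ∀ ⦃e₂⦄, e₂ ∈ G.edgeSet → e₁ ≠ e₂ →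
    (∃ v, v ∈ e₁ ∧ v ∈ e₂) → c e₁ ≠ c e₂

theorem IsProperEdgeColoring.apply_ne (hc : IsProperEdgeColoring G c) {x y z : V}
    (hxy : G.Adj x y) (hyz : G.Adj y z) (hne : s(x, y) ≠ s(y, z)) : c s(x, y) ≠ c s(y, z) :=
  hc hxy hyz hne ⟨y, Sym2.mem_mk_right x y, Sym2.mem_mk_left y z⟩

variable [DecidableEq β] [DecidableEq γ]

theorem IsProperEdgeColoring.three_le_card_iff (hc : IsProperEdgeColoring G c)
    {x₀ x₁ x₂ x₃ x₄ : V} (h₁ : G.Adj x₀ x₁) (h₂ : G.Adj x₁ x₂) (h₃ : G.Adj x₂ x₃)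
    (h₄ : G.Adj x₃ x₄) (hnd : [s(x₀, x₁), s(x₁, x₂), s(x₂, x₃), s(x₃, x₄)].Nodup) :
    3 ≤ #{c s(x₀, x₁), c s(x₁, x₂), c s(x₂, x₃), c s(x₃, x₄)} ↔
      ¬(c s(x₀, x₁) = c s(x₂, x₃) ∧ c s(x₁, x₂) = c s(x₃, x₄)) := by
  simp only [List.nodup_cons, List.mem_cons, List.not_mem_nil, or_false, not_or] at hnd
  exact three_le_card_insert_iff (hc.apply_ne h₁ h₂ hnd.1.1) (hc.apply_ne h₂ h₃ hnd.2.1.1)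
    (hc.apply_ne h₃ h₄ hnd.2.2.1)

theorem isStarEdgeColoring_iff :
    IsStarEdgeColoring G c ↔ IsProperEdgeColoring G c ∧
      ∀ ⦃x₀ x₁ x₂ x₃ x₄ : V⦄, G.Adj x₀ x₁ → G.Adj x₁ x₂ → G.Adj x₂ x₃ → G.Adj x₃ x₄ →
        [s(x₀, x₁), s(x₁, x₂), s(x₂, x₃), s(x₃, x₄)].Nodup →
        c s(x₀, x₁) = c s(x₂, x₃) → c s(x₁, x₂) ≠ c s(x₃, x₄) := by
  refine and_congr_right fun (hc : IsProperEdgeColoring G c) =>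
    ⟨fun h x₀ x₁ x₂ x₃ x₄ h₁ h₂ h₃ h₄ hnd h₁₃ h₂₄ => ?_, fun h u v p hp hnd => ?_⟩
  · have := h _ _ (.cons h₁ (.cons h₂ (.cons h₃ (.cons h₄ .nil)))) rfl hnd
    simp only [Walk.edges_cons, Walk.edges_nil, List.map_cons, List.map_nil,
      List.toFinset_cons, List.toFinset_nil, insert_empty_eq] at this
    exact (hc.three_le_card_iff h₁ h₂ h₃ h₄ hnd).1 this ⟨h₁₃, h₂₄⟩
  · obtain _ | ⟨h₁, _ | ⟨h₂, _ | ⟨h₃, _ | ⟨h₄, _ | ⟨h₅, p⟩⟩⟩⟩⟩ := p <;>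
      simp only [Walk.length_cons, Walk.length_nil] at hp <;> try omega
    simp only [Walk.edges_cons, Walk.edges_nil, List.map_cons, List.map_nil,
      List.toFinset_cons, List.toFinset_nil, insert_empty_eq] at hnd ⊢
    exact (hc.three_le_card_iff h₁ h₂ h₃ h₄ hnd).2 fun ⟨h₁₃, h₂₄⟩ => h h₁ h₂ h₃ h₄ hnd h₁₃ h₂₄

theorem IsStarEdgeColoring.comp {f : β → γ} (hf : Injective f) (hc : IsStarEdgeColoring G c) :
    IsStarEdgeColoring G (f ∘ c) := by
  refine ⟨fun e₁ h₁ e₂ h₂ hne hv => hf.ne (hc.1 h₁ h₂ hne hv), fun u v p hp hnd => ?_⟩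
  rw [← List.map_map, show ((p.edges.map c).map f).toFinset = (p.edges.map c).toFinset.image f
    by ext; simp, card_image_of_injective _ hf]
  exact hc.2 u v p hp hnd

theorem starChromaticIndex_le_card [Fintype β] (hc : IsStarEdgeColoring G c) :
    starChromaticIndex G ≤ Fintype.card β :=
  Nat.sInf_le ⟨_, hc.comp (Fintype.equivFin β).injective⟩

end EdgeColoring

section CompleteBipartite

variable {α β γ : Type*}

open Sum

/-- `g a v` colours the edge `a v` of `K_{α,β}`; the last two fields forbid the bicoloured
paths `u a v b w` and `a u b v x`. -/
structure IsStarArray (g : α → β → γ) : Prop where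
  injective_row : ∀ a, Injective (g a)
  injective_col : ∀ v, Injective (g · v)
  ne_of_row_ne : ∀ ⦃a b⦄, a ≠ b → ∀ ⦃u v⦄, g a u = g b v → ∀ w, g a v ≠ g b w
  ne_of_col_ne : ∀ ⦃u v⦄, u ≠ v → ∀ ⦃a b⦄, g a u = g b v → ∀ x, g b u ≠ g x v

def edgeColoringOfArray [Inhabited γ] (g : α → β → γ) : Sym2 (α ⊕ β) → γ :=
  Sym2.lift ⟨fun x y => match x, y with
    | inl a, inr v | inr v, inl a => g a v
    | _, _ => default, by rintro (a | u) (b | v) <;> rfl⟩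

theorem exists_eq_of_mem_edgeSet_completeBipartiteGraph {e : Sym2 (α ⊕ β)}
    (he : e ∈ (completeBipartiteGraph α β).edgeSet) : ∃ a v, e = s(inl a, inr v) := by
  induction e using Sym2.ind with
  | _ x y =>
    rcases x with a | u <;> rcases y with b | v <;> simp at he
    · exact ⟨a, v, rfl⟩
    · exact ⟨b, u, Sym2.eq_swap⟩

variable {c : Sym2 (α ⊕ β) → γ}

theorem isProperEdgeColoring_completeBipartiteGraph_iff :
    IsProperEdgeColoring (completeBipartiteGraph α β) c ↔
      (∀ a, Injective fun v => c s(inl a, inr v)) ∧ ∀ v, Injective fun a => c s(inl a, inr v) := by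
  refine ⟨fun hc => ⟨fun a u v huv => ?_, fun v a b hab => ?_⟩, fun ⟨hrow, hcol⟩ => ?_⟩
  · by_contra hne
    exact hc (by simp) (by simp) (by simpa using hne) ⟨inl a, by simp, by simp⟩ huv
  · by_contra hne
    exact hc (by simp) (by simp) (by simpa using hne) ⟨inr v, by simp, by simp⟩ hab
  · intro e₁ he₁ e₂ he₂ hne ⟨z, hz₁, hz₂⟩
    obtain ⟨a, u, rfl⟩ := exists_eq_of_mem_edgeSet_completeBipartiteGraph he₁
    obtain ⟨b, v, rfl⟩ := exists_eq_of_mem_edgeSet_completeBipartiteGraph he₂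
    simp only [Sym2.mem_iff] at hz₁ hz₂
    rcases hz₁ with rfl | rfl <;> simp only [inl.injEq, inr.injEq, reduceCtorEq, or_false,
      false_or] at hz₂ <;> subst hz₂
    · exact (hrow a).ne (by simpa using hne)
    · exact (hcol u).ne (by simpa using hne)

variable [DecidableEq γ]

theorem isStarEdgeColoring_completeBipartiteGraph_iff :
    IsStarEdgeColoring (completeBipartiteGraph α β) c ↔
      IsStarArray fun a v => c s(inl a, inr v) := by
  have swap (a : α) (v : β) : c s(inr v, inl a) = c s(inl a, inr v) := congrArg c Sym2.eq_swap
  rw [isStarEdgeColoring_iff, isProperEdgeColoring_completeBipartiteGraph_iff]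
  constructor
  · rintro ⟨⟨hrow, hcol⟩, hpath⟩
    refine ⟨hrow, hcol, fun a b hab u v huv w => ?_, fun u v huv a b hab x => ?_⟩
    · intro h
      have huv' : u ≠ v := by rintro rfl; exact hab (hcol u huv)
      have hvw : v ≠ w := by rintro rfl; exact hab (hcol v h)
      have hpath := hpath (x₀ := inr u) (x₁ := inl a) (x₂ := inr v) (x₃ := inl b) (x₄ := inr w)
        (by simp) (by simp) (by simp) (by simp) (by simp [hab, huv', hvw])
      simp only [swap] at hpath
      exact hpath huv h
    · intro h
      have hab' : a ≠ b := by rintro rfl; exact huv (hrow a hab)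
      have hbx : b ≠ x := by rintro rfl; exact huv (hrow b h)
      have hpath := hpath (x₀ := inl a) (x₁ := inr u) (x₂ := inl b) (x₃ := inr v) (x₄ := inl x)
        (by simp) (by simp) (by simp) (by simp) (by simp [huv, hab', hbx])
      simp only [swap] at hpath
      exact hpath hab h
  · rintro ⟨hrow, hcol, hrow_ne, hcol_ne⟩
    refine ⟨⟨hrow, hcol⟩, fun x₀ x₁ x₂ x₃ x₄ h₁ h₂ h₃ h₄ hnd => ?_⟩
    rcases x₀ with a₀ | u₀ <;> rcases x₁ with a₁ | u₁ <;> rcases x₂ with a₂ | u₂ <;>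
      rcases x₃ with a₃ | u₃ <;> rcases x₄ with a₄ | u₄ <;>
      simp only [completeBipartiteGraph_adj, isLeft_inl, isRight_inr, isLeft_inr, isRight_inl,
        and_self, and_false, false_and, or_false, false_or, Bool.false_eq_true] at h₁ h₂ h₃ h₄ <;>
      simp only [swap]
    · exact fun h => hcol_ne (u := u₁) (v := u₃) (by rintro rfl; simp at hnd) h a₄
    · exact fun h => hrow_ne (a := a₁) (b := a₃) (by rintro rfl; simp at hnd) h u₄

theorem IsStarArray.card_le {ι : Type*} [Fintype ι] [Fintype γ] {g : Fin 3 → ι → γ}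
    (hg : IsStarArray g) : 3 * ((Fintype.card ι + 1) / 2) ≤ Fintype.card γ := by
  set A : Fin 3 → Finset γ := fun a => univ.image (g a)
  have hA (a : Fin 3) : #(A a) = Fintype.card ι := card_image_of_injective _ (hg.injective_row a)
  have hI {a b : Fin 3} (hab : a ≠ b) : 2 * #(A a ∩ A b) ≤ Fintype.card ι :=
    two_mul_card_image_inter_image_le (hg.injective_row a) (hg.injective_row b)
      (hg.ne_of_row_ne hab)
  have hsum := card_add_card_add_card_le (A 0) (A 1) (A 2)
  rw [hA, hA, hA] at hsum
  have := card_le_univ (A 0 ∪ A 1 ∪ A 2)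
  have := hI (a := 0) (b := 1) (by decide)
  have := hI (a := 0) (b := 2) (by decide)
  have := hI (a := 1) (b := 2) (by decide)
  omega

end CompleteBipartite

def k3dColor (m : ℕ) [NeZero m] (a : Fin 3) (v : ℕ) : Fin m × Fin 3 :=
  (Fin.ofNat m (v / 2 + a / 2), Fin.ofNat 3 (a + v % 2))

section K3d

variable {m : ℕ} [NeZero m]

theorem k3dColor_eq_iff {a b : Fin 3} {u v : ℕ} :
    k3dColor m a u = k3dColor m b v ↔
      u / 2 + a / 2 ≡ v / 2 + b / 2 [MOD m] ∧ (a + u % 2) % 3 = (b + v % 2) % 3 := by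
  simp [k3dColor, Prod.ext_iff, Fin.ext_iff, Nat.ModEq]

theorem isStarArray_k3dColor {d : ℕ} (hm : 3 ≤ m) (hd : d ≤ 2 * m) :
    IsStarArray fun a (v : Fin d) => k3dColor m a v where
  injective_row a u v h := by
    obtain ⟨hblock, hres⟩ := k3dColor_eq_iff.1 h
    have := (hblock.add_right_cancel' _).eq_of_lt_of_lt (by omega) (by omega)
    omega
  injective_col v a b h := by
    have := (k3dColor_eq_iff.1 h).2
    omega
  ne_of_row_ne a b hab u v h w h' := by
    have := (k3dColor_eq_iff.1 h).2
    have := (k3dColor_eq_iff.1 h').2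
    have := Fin.val_ne_of_ne hab
    have := Nat.mod_two_eq_zero_or_one v
    omega
  ne_of_col_ne u v huv a b h x h' := by
    obtain ⟨hblock, hres⟩ := k3dColor_eq_iff.1 h
    obtain ⟨hblock', hres'⟩ := k3dColor_eq_iff.1 h'
    by_cases hpar : u.val % 2 = v % 2
    · have hab : a = b := by ext; omega
      subst hab
      have := (hblock.add_right_cancel' _).eq_of_lt_of_lt (by omega) (by omega)
      exact huv (by ext; omega)
    · have := hblock.add_eq_two_mul hm (by omega) (by omega) (by omega) hblock'
      have : b.val = 0 ∨ b.val = 1 ∨ b.val = 2 := by omega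
      omega

end K3d

theorem starChromaticIndex_K3d (d : ℕ) (hd : 5 ≤ d) :
    starChromaticIndex (completeBipartiteGraph (Fin 3) (Fin d)) = 3 * ((d + 1) / 2) := by
  set m := (d + 1) / 2
  have : NeZero m := ⟨by omega⟩
  have hstar : IsStarEdgeColoring (completeBipartiteGraph (Fin 3) (Fin d))
      (edgeColoringOfArray fun a (v : Fin d) => k3dColor m a v) :=
    isStarEdgeColoring_completeBipartiteGraph_iff.2 (isStarArray_k3dColor (by omega) (by omega))
  refine le_antisymm ((starChromaticIndex_le_card hstar).trans_eq (by simp [mul_comm])) ?_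
  refine le_csInf ⟨_, _, hstar.comp (Fintype.equivFin _).injective⟩ fun n ⟨c, hc⟩ => ?_
  simpa using (isStarEdgeColoring_completeBipartiteGraph_iff.1 hc).card_le
end

section
/- For even d = 2k ≥ 6, the complete bipartite graph K_{3,2k} admits a star edge coloring with 3k colors. -/
open SimpleGraph

namespace K3StarAux

def base (i : Fin 3) (j : ℕ) : ℕ :=
  if i.val = 0 then (if j % 2 = 0 then 0 else 1)
  else if i.val = 1 then (if j % 2 = 0 then 2 else 3)
  else (if j % 2 = 0 then 4 else 2)

def fnat (i : Fin 3) (j : ℕ) : ℕ := base i j + 3 * (j / 2)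

def F (k : ℕ) (i : Fin 3) (j : Fin (2 * k)) : Fin (3 * k) :=
  ⟨fnat i j % (3 * k), Nat.mod_lt _ (by have := j.isLt; omega)⟩

lemma dvd_of_eq {k : ℕ} {i i' : Fin 3} {j j' : Fin (2 * k)} (h : F k i j = F k i' j') :
    ((3 * k : ℕ) : ℤ) ∣ ((base i' (j' : ℕ) : ℤ) + 3 * (((j' : ℕ) / 2 : ℕ) : ℤ)) -
      ((base i (j : ℕ) : ℤ) + 3 * (((j : ℕ) / 2 : ℕ) : ℤ)) := by
  have h0 : fnat i (j : ℕ) ≡ fnat i' (j' : ℕ) [MOD 3 * k] := congrArg Fin.val h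
  have h1 := (Int.natCast_modEq_iff.mpr h0).dvd
  have e1 : ((fnat i (j : ℕ) : ℕ) : ℤ) = (base i (j : ℕ) : ℤ) + 3 * (((j : ℕ) / 2 : ℕ) : ℤ) := by
    unfold fnat; push_cast; ring
  have e2 : ((fnat i' (j' : ℕ) : ℕ) : ℤ) = (base i' (j' : ℕ) : ℤ) + 3 * (((j' : ℕ) / 2 : ℕ) : ℤ) := by
    unfold fnat; push_cast; ring
  rw [e1, e2] at h1
  exact h1

lemma dvd_facts {k : ℕ} (X : ℤ) (h : ((3 * k : ℕ) : ℤ) ∣ X) :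
    (3 : ℤ) ∣ X ∧ (X = 0 ∨ 3 * k ≤ X.natAbs) := by
  constructor
  · exact dvd_trans (by push_cast; exact Dvd.intro k rfl) h
  · rcases eq_or_ne X 0 with rfl | hX
    · exact Or.inl rfl
    · right
      have h2 : 3 * k ∣ X.natAbs := by
        have h3 := Int.natAbs_dvd_natAbs.mpr h
        rwa [Int.natAbs_natCast] at h3
      exact Nat.le_of_dvd (by omega) h2

lemma inj_b {k : ℕ} (hk : 3 ≤ k) {i : Fin 3} {j j' : Fin (2 * k)}
    (h : F k i j = F k i j') : j = j' := by
  obtain ⟨d3, dbig⟩ := dvd_facts _ (dvd_of_eq h)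
  have hj := j.isLt; have hj' := j'.isLt
  apply Fin.ext
  unfold base at d3 dbig
  split_ifs at d3 dbig <;> omega

lemma inj_a {k : ℕ} (hk : 3 ≤ k) {i i' : Fin 3} {j : Fin (2 * k)}
    (h : F k i j = F k i' j) : i = i' := by
  obtain ⟨d3, dbig⟩ := dvd_facts _ (dvd_of_eq h)
  have hi := i.isLt; have hi' := i'.isLt
  apply Fin.ext
  unfold base at d3 dbig
  split_ifs at d3 dbig <;> omega

set_option maxHeartbeats 2000000 in
lemma keyP2 {k : ℕ} (hk : 3 ≤ k) {a a' a'' : Fin 3} {b b' : Fin (2 * k)}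
    (ha : a ≠ a') (ha' : a' ≠ a'') (hb : b ≠ b')
    (h1 : F k a b = F k a' b') (h2 : F k a' b = F k a'' b') : False := by
  obtain ⟨d3, dbig⟩ := dvd_facts _ (dvd_of_eq h1)
  obtain ⟨e3, ebig⟩ := dvd_facts _ (dvd_of_eq h2)
  obtain ⟨s3, sbig⟩ := dvd_facts _ (dvd_sub (dvd_of_eq h1) (dvd_of_eq h2))
  have hha : a.val ≠ a'.val := fun hh => ha (Fin.ext hh)
  have hha' : a'.val ≠ a''.val := fun hh => ha' (Fin.ext hh)
  have hhb : b.val ≠ b'.val := fun hh => hb (Fin.ext hh)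
  have hj := b.isLt; have hj' := b'.isLt
  have hi := a.isLt; have hi' := a'.isLt; have hi'' := a''.isLt
  unfold base at d3 dbig e3 ebig s3 sbig
  split_ifs at d3 dbig e3 ebig s3 sbig <;> omega

lemma keyP3 {k : ℕ} (hk : 3 ≤ k) {a a' : Fin 3} {b b' b'' : Fin (2 * k)}
    (ha : a ≠ a')
    (h1 : F k a b = F k a' b') (h2 : F k a b' = F k a' b'') : False := by
  obtain ⟨d3, dbig⟩ := dvd_facts _ (dvd_of_eq h1)
  obtain ⟨e3, ebig⟩ := dvd_facts _ (dvd_of_eq h2)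
  have hha : a.val ≠ a'.val := fun hh => ha (Fin.ext hh)
  have hi := a.isLt; have hi' := a'.isLt
  unfold base at d3 dbig e3 ebig
  split_ifs at d3 dbig e3 ebig <;> omega

def col (k : ℕ) (hk : 0 < k) : (Fin 3 ⊕ Fin (2 * k)) → (Fin 3 ⊕ Fin (2 * k)) → Fin (3 * k)
  | .inl i, .inr j => F k i j
  | .inr j, .inl i => F k i j
  | _, _ => ⟨0, by omega⟩

lemma col_symm (k : ℕ) (hk : 0 < k) (x y : Fin 3 ⊕ Fin (2 * k)) :
    col k hk x y = col k hk y x := by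
  rcases x with i | j <;> rcases y with i' | j' <;> rfl

def cfun (k : ℕ) (hk : 0 < k) : Sym2 (Fin 3 ⊕ Fin (2 * k)) → Fin (3 * k) :=
  Sym2.lift ⟨col k hk, col_symm k hk⟩

@[simp] lemma cfun_lr (k : ℕ) (hk : 0 < k) (i : Fin 3) (j : Fin (2 * k)) :
    cfun k hk s(Sum.inl i, Sum.inr j) = F k i j := rfl

@[simp] lemma cfun_rl (k : ℕ) (hk : 0 < k) (i : Fin 3) (j : Fin (2 * k)) :
    cfun k hk s(Sum.inr j, Sum.inl i) = F k i j := rfl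

lemma shape {k : ℕ} {e : Sym2 (Fin 3 ⊕ Fin (2 * k))}
    (he : e ∈ (completeBipartiteGraph (Fin 3) (Fin (2 * k))).edgeSet) :
    ∃ i j, e = s(Sum.inl i, Sum.inr j) := by
  induction e using Sym2.ind with
  | _ x y =>
    rw [mem_edgeSet] at he
    rcases x with i | j <;> rcases y with i' | j' <;> simp at he
    · exact ⟨i, j', rfl⟩
    · exact ⟨i', j, Sym2.eq_swap⟩

lemma three_le {β : Type*} [DecidableEq β] {S : Finset β} {a b c : β}
    (ha : a ∈ S) (hb : b ∈ S) (hc : c ∈ S)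
    (hab : a ≠ b) (hac : a ≠ c) (hbc : b ≠ c) : 3 ≤ S.card := by
  have hsub : ({a, b, c} : Finset β) ⊆ S := by
    intro x hx; simp only [Finset.mem_insert, Finset.mem_singleton] at hx
    rcases hx with rfl | rfl | rfl <;> assumption
  refine le_trans (le_of_eq ?_) (Finset.card_le_card hsub)
  rw [Finset.card_insert_of_notMem (by simp [hab, hac]),
    Finset.card_insert_of_notMem (by simp [hbc]), Finset.card_singleton]

lemma adjL {k : ℕ} {a : Fin 3} {y}
    (h : (completeBipartiteGraph (Fin 3) (Fin (2 * k))).Adj (Sum.inl a) y) :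
    ∃ b, y = Sum.inr b := by
  rcases y with a' | b
  · simp at h
  · exact ⟨b, rfl⟩

lemma adjR {k : ℕ} {b : Fin (2 * k)} {y}
    (h : (completeBipartiteGraph (Fin 3) (Fin (2 * k))).Adj (Sum.inr b) y) :
    ∃ a, y = Sum.inl a := by
  rcases y with a | b'
  · exact ⟨a, rfl⟩
  · simp at h

end K3StarAux

open K3StarAux in
theorem K3_even_star_colorable (k : ℕ) (hk : 3 ≤ k) :
    ∃ c : Sym2 (Fin 3 ⊕ Fin (2 * k)) → Fin (3 * k),
      IsStarEdgeColoring (completeBipartiteGraph (Fin 3) (Fin (2 * k))) c := by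
  have hk0 : 0 < k := by omega
  refine ⟨cfun k hk0, ?_, ?_⟩
  · -- properness
    rintro e1 he1 e2 he2 hne ⟨w, hw1, hw2⟩
    obtain ⟨i, j, rfl⟩ := shape he1
    obtain ⟨i', j', rfl⟩ := shape he2
    rw [Sym2.mem_iff] at hw1 hw2
    rcases hw1 with rfl | rfl <;> rcases hw2 with hw | hw
    · -- w = inl i = inl i'
      obtain rfl : i = i' := by simpa using hw
      have hjj : j ≠ j' := fun hh => hne (by rw [hh])
      simp only [cfun_lr]
      exact fun hF => hjj (inj_b hk hF)
    · exact absurd hw (by simp)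
    · exact absurd hw (by simp)
    · -- w = inr j = inr j'
      obtain rfl : j = j' := by simpa using hw
      have hii : i ≠ i' := fun hh => hne (by rw [hh])
      simp only [cfun_lr]
      exact fun hF => hii (inj_a hk hF)
  · -- no bicolored path/cycle of length 4
    intro u v p hlen hnd
    cases p with
    | nil => simp at hlen
    | @cons _ x1 _ h1 p =>
    cases p with
    | nil => simp at hlen
    | @cons _ x2 _ h2 p =>
    cases p with
    | nil => simp at hlen
    | @cons _ x3 _ h3 p =>
    cases p with
    | nil => simp at hlen
    | @cons _ x4 _ h4 p =>
    cases p with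
    | @cons _ x5 _ h5 p => simp [SimpleGraph.Walk.length_cons] at hlen
    | nil =>
      simp only [SimpleGraph.Walk.edges_cons, SimpleGraph.Walk.edges_nil] at hnd ⊢
      rcases u with a0 | b0
      · -- path a0 - b1 - a2 - b3 - a4
        obtain ⟨b1, rfl⟩ := adjL h1
        obtain ⟨a2, rfl⟩ := adjR h2
        obtain ⟨b3, rfl⟩ := adjL h3
        obtain ⟨a4, rfl⟩ := adjR h4
        simp [List.nodup_cons, Sym2.eq_iff] at hnd
        obtain ⟨⟨h02, -, -⟩, ⟨h13, -⟩, h24⟩ := hnd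
        simp only [List.map_cons, List.map_nil, cfun_lr, cfun_rl]
        have m1 : F k a0 b1 ∈ (([F k a0 b1, F k a2 b1, F k a2 b3, F k a4 b3] : List _)).toFinset := by simp
        have m2 : F k a2 b1 ∈ (([F k a0 b1, F k a2 b1, F k a2 b3, F k a4 b3] : List _)).toFinset := by simp
        have m3 : F k a2 b3 ∈ (([F k a0 b1, F k a2 b1, F k a2 b3, F k a4 b3] : List _)).toFinset := by simp
        have m4 : F k a4 b3 ∈ (([F k a0 b1, F k a2 b1, F k a2 b3, F k a4 b3] : List _)).toFinset := by simp
        have c12 : F k a0 b1 ≠ F k a2 b1 := fun hF => h02 (inj_a hk hF)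
        have c23 : F k a2 b1 ≠ F k a2 b3 := fun hF => h13 (inj_b hk hF)
        have c34 : F k a2 b3 ≠ F k a4 b3 := fun hF => h24 (inj_a hk hF)
        by_cases hc : F k a0 b1 = F k a2 b3
        · have c24 : F k a2 b1 ≠ F k a4 b3 := fun hF =>
            keyP2 hk (fun hh => h02 hh) (fun hh => h24 hh) (fun hh => h13 hh) hc hF
          exact three_le m1 m2 m4 c12 (hc ▸ c34) c24
        · exact three_le m1 m2 m3 c12 hc c23
      · -- path b0 - a1 - b2 - a3 - b4
        obtain ⟨a1, rfl⟩ := adjR h1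
        obtain ⟨b2, rfl⟩ := adjL h2
        obtain ⟨a3, rfl⟩ := adjR h3
        obtain ⟨b4, rfl⟩ := adjL h4
        simp [List.nodup_cons, Sym2.eq_iff] at hnd
        obtain ⟨⟨h02, -, -⟩, ⟨h13, -⟩, h24⟩ := hnd
        simp only [List.map_cons, List.map_nil, cfun_lr, cfun_rl]
        have m1 : F k a1 b0 ∈ (([F k a1 b0, F k a1 b2, F k a3 b2, F k a3 b4] : List _)).toFinset := by simp
        have m2 : F k a1 b2 ∈ (([F k a1 b0, F k a1 b2, F k a3 b2, F k a3 b4] : List _)).toFinset := by simp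
        have m3 : F k a3 b2 ∈ (([F k a1 b0, F k a1 b2, F k a3 b2, F k a3 b4] : List _)).toFinset := by simp
        have m4 : F k a3 b4 ∈ (([F k a1 b0, F k a1 b2, F k a3 b2, F k a3 b4] : List _)).toFinset := by simp
        have c12 : F k a1 b0 ≠ F k a1 b2 := fun hF => h02 (inj_b hk hF)
        have c23 : F k a1 b2 ≠ F k a3 b2 := fun hF => h13 (inj_a hk hF)
        have c34 : F k a3 b2 ≠ F k a3 b4 := fun hF => h24 (inj_b hk hF)
        by_cases hc : F k a1 b0 = F k a3 b2
        · have c24 : F k a1 b2 ≠ F k a3 b4 := fun hF => keyP3 hk (fun hh => h13 hh) hc hF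
          exact three_le m1 m2 m4 c12 (hc ▸ c34) c24
        · exact three_le m1 m2 m3 c12 hc c23
end

section
/- For odd d = 2k+1 ≥ 5, any star edge coloring of K_{3,d} uses at least 3k+3 colors. -/
open SimpleGraph

theorem K3_odd_star_lower (k : ℕ) (hk : 2 ≤ k) (n : ℕ)
    (c : Sym2 (Fin 3 ⊕ Fin (2 * k + 1)) → Fin n)
    (hc : IsStarEdgeColoring (completeBipartiteGraph (Fin 3) (Fin (2 * k + 1))) c) :
    3 * k + 3 ≤ n := by
  classical
  set G := completeBipartiteGraph (Fin 3) (Fin (2 * k + 1)) with hG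
  set f : Fin 3 → Fin (2 * k + 1) → Fin n :=
    fun i y => c s(Sum.inl i, Sum.inr y) with hf
  have hadj : ∀ (i : Fin 3) (y : Fin (2 * k + 1)), G.Adj (Sum.inl i) (Sum.inr y) := by
    intro i y; simp [hG]
  have hmem : ∀ (i : Fin 3) (y : Fin (2 * k + 1)),
      s(Sum.inl i, Sum.inr y) ∈ G.edgeSet := fun i y => hadj i y
  have hprop := hc.1
  have hfinj : ∀ i, Function.Injective (f i) := by
    intro i y y' h
    by_contra hne
    refine hprop (hmem i y) (hmem i y') ?_ ⟨Sum.inl i, by simp, by simp⟩ h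
    simp [Sym2.eq_iff, hne]
  have hcross : ∀ (i j : Fin 3) (y : Fin (2 * k + 1)), i ≠ j → f i y ≠ f j y := by
    intro i j y hij
    refine hprop (hmem i y) (hmem j y) ?_ ⟨Sum.inr y, by simp, by simp⟩
    simp [Sym2.eq_iff, hij]
  set A : Fin 3 → Finset (Fin n) := fun i => Finset.image (f i) Finset.univ with hA
  have hAcard : ∀ i, (A i).card = 2 * k + 1 := by
    intro i
    rw [hA]
    rw [Finset.card_image_of_injective _ (hfinj i), Finset.card_univ, Fintype.card_fin]
  have hIcap : ∀ i j : Fin 3, i ≠ j → (A i ∩ A j).card ≤ k := by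
    intro i j hij
    set z : Fin n → Fin (2 * k + 1) := fun α => Function.invFun (f j) α with hzdef
    set y : Fin n → Fin (2 * k + 1) := fun α => Function.invFun (f i) α with hydef
    have hzspec : ∀ α ∈ A j, f j (z α) = α := by
      intro α hα
      obtain ⟨w, -, hw⟩ := Finset.mem_image.mp hα
      exact Function.invFun_eq ⟨w, hw⟩
    have hyspec : ∀ α ∈ A i, f i (y α) = α := by
      intro α hα
      obtain ⟨w, -, hw⟩ := Finset.mem_image.mp hα
      exact Function.invFun_eq ⟨w, hw⟩
    have key : ∀ α ∈ A i ∩ A j, f i (z α) ∈ A i \ (A i ∩ A j) := by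
      intro α hα
      have hαi := (Finset.mem_inter.mp hα).1
      have hαj := (Finset.mem_inter.mp hα).2
      have hyz : y α ≠ z α := by
        intro h
        exact hcross i j (y α) hij (by rw [hyspec α hαi, h, hzspec α hαj])
      have hab : α ≠ f i (z α) := fun h =>
        hyz (hfinj i ((hyspec α hαi).trans h))
      refine Finset.mem_sdiff.mpr ⟨Finset.mem_image_of_mem _ (Finset.mem_univ _), ?_⟩
      intro hβ
      have hβj := (Finset.mem_inter.mp hβ).2
      have hwspec : f j (z (f i (z α))) = f i (z α) := hzspec _ hβj
      set w := z (f i (z α)) with hwdef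
      have hzw : z α ≠ w := fun h =>
        hab ((hzspec α hαj).symm.trans ((congrArg (f j) h).trans hwspec))
      let p : G.Walk (Sum.inr (y α)) (Sum.inr w) :=
        Walk.cons ((hadj i (y α)).symm)
          (Walk.cons (hadj i (z α))
            (Walk.cons ((hadj j (z α)).symm)
              (Walk.cons (hadj j w) Walk.nil)))
      have hlen : p.length = 4 := rfl
      have hedges : p.edges = [s(Sum.inr (y α), Sum.inl i), s(Sum.inl i, Sum.inr (z α)),
          s(Sum.inr (z α), Sum.inl j), s(Sum.inl j, Sum.inr w)] := rfl
      have hnodup : p.edges.Nodup := by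
        rw [hedges]
        simp [Sym2.eq_iff, hyz, hij, hzw, Ne.symm hij]
      have h1 : c s(Sum.inr (y α), Sum.inl i) = α := by
        rw [Sym2.eq_swap]; exact hyspec α hαi
      have h3 : c s(Sum.inr (z α), Sum.inl j) = α := by
        rw [Sym2.eq_swap]; exact hzspec α hαj
      have h4 : c s(Sum.inl j, Sum.inr w) = f i (z α) := hwspec
      have hsub : (p.edges.map c).toFinset ⊆ {α, f i (z α)} := by
        rw [hedges]
        intro x hx
        simp only [List.map_cons, List.map_nil, List.mem_toFinset, List.mem_cons,
          List.not_mem_nil, or_false] at hx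
        rcases hx with h | h | h | h <;>
          simp_all [h1, h3, h4, Finset.mem_insert]
      have hge := hc.2 _ _ p hlen hnodup
      have hle : (p.edges.map c).toFinset.card ≤ 2 := by
        refine le_trans (Finset.card_le_card hsub) ?_
        refine le_trans (Finset.card_insert_le _ _) ?_
        simp
      omega
    have hinj : Set.InjOn (fun α => f i (z α)) ↑(A i ∩ A j) := by
      intro a ha b hb h
      have h' : z a = z b := hfinj i h
      have ha' := (Finset.mem_inter.mp (Finset.mem_coe.mp ha)).2
      have hb' := (Finset.mem_inter.mp (Finset.mem_coe.mp hb)).2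
      rw [← hzspec a ha', h', hzspec b hb']
    have hcard := Finset.card_le_card_of_injOn _ key hinj
    rw [Finset.card_sdiff_of_subset (Finset.inter_subset_left)] at hcard
    have hle : (A i ∩ A j).card ≤ (A i).card := Finset.card_le_card Finset.inter_subset_left
    rw [hAcard i] at hcard hle
    omega
  have h01 := hIcap 0 1 (by decide)
  have h02 := hIcap 0 2 (by decide)
  have h12 := hIcap 1 2 (by decide)
  have hu : (A 0 ∪ A 1 ∪ A 2).card ≤ n := by
    refine le_trans (Finset.card_le_univ _) ?_
    simp
  have e1 := Finset.card_union_add_card_inter (A 0) (A 1)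
  have e2 := Finset.card_union_add_card_inter (A 0 ∪ A 1) (A 2)
  have e3 : ((A 0 ∪ A 1) ∩ A 2).card ≤ (A 0 ∩ A 2).card + (A 1 ∩ A 2).card := by
    refine le_trans (Finset.card_le_card ?_) (Finset.card_union_le _ _)
    intro x hx
    simp only [Finset.mem_inter, Finset.mem_union] at hx ⊢
    tauto
  have c0 := hAcard 0
  have c1 := hAcard 1
  have c2 := hAcard 2
  omega
end

section
/- Let C_1, C_2, C_3, C_4 be finite sets each of cardinality d such that |C_i ∩ C_j| ≤ d/2 for all i ≠ j. Then |C_1 ∪ C_2 ∪ C_3 ∪ C_4| ≥ 10d/6. -/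
open SimpleGraph

theorem four_sets_union_lower (d : ℕ) (C : Fin 4 → Finset ℕ)
    (hcard : ∀ i, (C i).card = d)
    (hint : ∀ i j, i ≠ j → ((C i ∩ C j).card : ℚ) ≤ (d : ℚ) / 2) :
    (10 * d : ℚ) / 6 ≤ ((C 0 ∪ C 1 ∪ C 2 ∪ C 3).card : ℚ) := by
  classical
  set U : Finset ℕ := C 0 ∪ C 1 ∪ C 2 ∪ C 3 with hU
  have hsub : ∀ i, C i ⊆ U := by
    intro i
    fin_cases i <;> intro x hx <;> simp only [hU, Finset.mem_union] <;> tauto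
  have key : ∑ x ∈ U, (4 * ∑ i : Fin 4, (if x ∈ C i then 1 else 0)) ≤
      ∑ x ∈ U, (6 + ∑ i : Fin 4, ∑ j : Fin 4,
        if i ≠ j ∧ x ∈ C i ∧ x ∈ C j then 1 else 0) := by
    apply Finset.sum_le_sum
    intro x hx
    have hx' : x ∈ C 0 ∨ x ∈ C 1 ∨ x ∈ C 2 ∨ x ∈ C 3 := by
      simpa [hU, Finset.mem_union, or_assoc] using hx
    by_cases h0 : x ∈ C 0 <;> by_cases h1 : x ∈ C 1 <;> by_cases h2 : x ∈ C 2 <;>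
      by_cases h3 : x ∈ C 3 <;>
      simp only [Fin.sum_univ_four] <;>
      simp (config := { decide := true }) [h0, h1, h2, h3]
  have hL : ∑ x ∈ U, (4 * ∑ i : Fin 4, (if x ∈ C i then 1 else 0)) = 16 * d := by
    rw [← Finset.mul_sum, Finset.sum_comm]
    have h : ∀ i : Fin 4, ∑ x ∈ U, (if x ∈ C i then 1 else 0) = d := by
      intro i
      rw [Finset.sum_ite_mem, Finset.inter_eq_right.mpr (hsub i),
        Finset.sum_const, smul_eq_mul, mul_one, hcard]
    rw [Fin.sum_univ_four, h 0, h 1, h 2, h 3]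
    ring
  have hR : ∑ x ∈ U, (6 + ∑ i : Fin 4, ∑ j : Fin 4,
      if i ≠ j ∧ x ∈ C i ∧ x ∈ C j then 1 else 0) =
      6 * U.card + ∑ i : Fin 4, ∑ j : Fin 4,
        (if i ≠ j then (C i ∩ C j).card else 0) := by
    rw [Finset.sum_add_distrib, Finset.sum_const, smul_eq_mul, mul_comm]
    congr 1
    rw [Finset.sum_comm]
    apply Finset.sum_congr rfl
    intro i _
    rw [Finset.sum_comm]
    apply Finset.sum_congr rfl
    intro j _
    by_cases hij : i = j
    · simp [hij]
    · have : ∀ x, (i ≠ j ∧ x ∈ C i ∧ x ∈ C j) ↔ x ∈ C i ∩ C j := by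
        intro x; simp [hij, Finset.mem_inter]
      simp only [this, hij, if_neg, ite_not]
      rw [Finset.sum_ite_mem, Finset.inter_eq_right.mpr
        (fun x hx => hsub i (Finset.mem_inter.mp hx).1),
        Finset.sum_const, smul_eq_mul, mul_one]
      simp [hij]
  rw [hL, hR] at key
  simp only [Fin.sum_univ_four] at key
  simp (config := { decide := true }) only [ne_eq, ite_true, ite_false,
    if_true, if_false] at key
  have h01 := hint 0 1 (by decide)
  have h02 := hint 0 2 (by decide)
  have h03 := hint 0 3 (by decide)
  have h10 := hint 1 0 (by decide)
  have h12 := hint 1 2 (by decide)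
  have h13 := hint 1 3 (by decide)
  have h20 := hint 2 0 (by decide)
  have h21 := hint 2 1 (by decide)
  have h23 := hint 2 3 (by decide)
  have h30 := hint 3 0 (by decide)
  have h31 := hint 3 1 (by decide)
  have h32 := hint 3 2 (by decide)
  have keyQ := (Nat.cast_le (α := ℚ)).mpr key
  push_cast at keyQ
  linarith
end

section
/- For all r, d ≥ 1, the star chromatic index of the complete bipartite graph K_{r,d} satisfies χ'_st(K_{r,d}) ≤ 15⌈d/8⌉⌈r/8⌉. -/
open SimpleGraph

/-! ### An explicit star edge 15-coloring of `K_{8,8}` (found by SAT search) -/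

def starTbl : List (List Nat) :=
  [[0,1,2,3,4,5,6,7],
   [1,13,7,5,11,9,4,12],
   [14,9,11,1,8,0,2,4],
   [10,11,3,12,0,7,1,14],
   [8,12,1,6,5,10,9,0],
   [3,14,4,13,12,1,8,6],
   [6,10,14,7,1,2,13,9],
   [2,8,13,10,3,11,5,1]]

def sc (a b : Nat) : Nat := (starTbl.getD a []).getD b 0

lemma sc_lt : ∀ a b : Fin 8, sc a b < 15 := by decide
lemma sc_row : ∀ (a b b' : Fin 8), b ≠ b' → sc a b ≠ sc a b' := by decide
lemma sc_col : ∀ (a a' b : Fin 8), a ≠ a' → sc a b ≠ sc a' b := by decide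
set_option maxHeartbeats 2000000 in
lemma sc_S1 : ∀ (x0 x1 x2 y0 y1 : Fin 8), x0 ≠ x1 → x1 ≠ x2 → y0 ≠ y1 →
    ¬(sc x0 y0 = sc x1 y1 ∧ sc x1 y0 = sc x2 y1) := by decide
set_option maxHeartbeats 2000000 in
lemma sc_S2 : ∀ (x0 x1 y0 y1 y2 : Fin 8), x0 ≠ x1 → y0 ≠ y1 → y1 ≠ y2 →
    ¬(sc x0 y0 = sc x1 y1 ∧ sc x0 y1 = sc x1 y2) := by decide

/-! ### Block encoding -/

def enc (D a b : Nat) : Nat := 15 * (a / 8 * D + b / 8) + sc (a % 8) (b % 8)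

lemma sc_lt' (a b : Nat) : sc (a % 8) (b % 8) < 15 :=
  sc_lt ⟨a % 8, by omega⟩ ⟨b % 8, by omega⟩

lemma enc_lt {D R a b : Nat} (ha : a < 8 * R) (hb : b / 8 < D) :
    enc D a b < 15 * D * R := by
  have h1 : a / 8 < R := by omega
  have h2 : sc (a % 8) (b % 8) < 15 := sc_lt' a b
  have h3 : a / 8 * D + b / 8 + 1 ≤ R * D := by
    calc a / 8 * D + b / 8 + 1 ≤ a / 8 * D + D := by omega
    _ = (a / 8 + 1) * D := by ring
    _ ≤ R * D := Nat.mul_le_mul_right _ h1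
  calc enc D a b < 15 * (a / 8 * D + b / 8) + 15 := by unfold enc; omega
  _ = 15 * (a / 8 * D + b / 8 + 1) := by ring
  _ ≤ 15 * (R * D) := Nat.mul_le_mul_left _ h3
  _ = 15 * D * R := by ring

lemma enc_decode {D a b a' b' : Nat} (hb : b / 8 < D) (hb' : b' / 8 < D)
    (h : enc D a b = enc D a' b') :
    a / 8 = a' / 8 ∧ b / 8 = b' / 8 ∧ sc (a % 8) (b % 8) = sc (a' % 8) (b' % 8) := by
  have h1 : sc (a % 8) (b % 8) < 15 := sc_lt' a b
  have h2 : sc (a' % 8) (b' % 8) < 15 := sc_lt' a' b'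
  unfold enc at h
  have hD : 0 < D := by omega
  have hβ : a / 8 * D + b / 8 = a' / 8 * D + b' / 8 ∧
      sc (a % 8) (b % 8) = sc (a' % 8) (b' % 8) := by
    set X := a / 8 * D + b / 8
    set Y := a' / 8 * D + b' / 8
    omega
  have hβ' : D * (a / 8) + b / 8 = D * (a' / 8) + b' / 8 := by
    have := hβ.1; linarith [hβ.1]
  have hq : a / 8 = a' / 8 := by
    have := congrArg (· / D) hβ'
    simpa [Nat.mul_add_div hD, Nat.div_eq_of_lt hb, Nat.div_eq_of_lt hb'] using this
  refine ⟨hq, ?_, hβ.2⟩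
  rw [hq] at hβ'
  omega

lemma enc_ne_left {D a a' b : Nat} (hb : b / 8 < D) (h : a ≠ a') :
    enc D a b ≠ enc D a' b := by
  intro he
  obtain ⟨h1, -, h3⟩ := enc_decode hb hb he
  have hm : a % 8 ≠ a' % 8 := by omega
  exact sc_col ⟨a % 8, by omega⟩ ⟨a' % 8, by omega⟩ ⟨b % 8, by omega⟩
    (by simpa [Fin.ext_iff] using hm) h3

lemma enc_ne_right {D a b b' : Nat} (hb : b / 8 < D) (hb' : b' / 8 < D) (h : b ≠ b') :
    enc D a b ≠ enc D a b' := by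
  intro he
  obtain ⟨-, h2, h3⟩ := enc_decode hb hb' he
  have hm : b % 8 ≠ b' % 8 := by omega
  exact sc_row ⟨a % 8, by omega⟩ ⟨b % 8, by omega⟩ ⟨b' % 8, by omega⟩
    (by simpa [Fin.ext_iff] using hm) h3

lemma enc_star1 {D x0 x1 x2 y0 y1 : Nat} (h0 : y0 / 8 < D) (h1 : y1 / 8 < D)
    (hx01 : x0 ≠ x1) (hx12 : x1 ≠ x2) (hy : y0 ≠ y1) :
    ¬(enc D x0 y0 = enc D x1 y1 ∧ enc D x1 y0 = enc D x2 y1) := by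
  rintro ⟨e1, e2⟩
  obtain ⟨a1, b1, c1⟩ := enc_decode h0 h1 e1
  obtain ⟨a2, b2, c2⟩ := enc_decode h0 h1 e2
  have m1 : x0 % 8 ≠ x1 % 8 := by omega
  have m2 : x1 % 8 ≠ x2 % 8 := by omega
  have m3 : y0 % 8 ≠ y1 % 8 := by omega
  exact sc_S1 ⟨x0 % 8, by omega⟩ ⟨x1 % 8, by omega⟩ ⟨x2 % 8, by omega⟩
    ⟨y0 % 8, by omega⟩ ⟨y1 % 8, by omega⟩
    (by simpa [Fin.ext_iff] using m1) (by simpa [Fin.ext_iff] using m2)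
    (by simpa [Fin.ext_iff] using m3) ⟨c1, c2⟩

lemma enc_star2 {D x0 x1 y0 y1 y2 : Nat} (h0 : y0 / 8 < D) (h1 : y1 / 8 < D)
    (h2 : y2 / 8 < D) (hx : x0 ≠ x1) (hy01 : y0 ≠ y1) (hy12 : y1 ≠ y2) :
    ¬(enc D x0 y0 = enc D x1 y1 ∧ enc D x0 y1 = enc D x1 y2) := by
  rintro ⟨e1, e2⟩
  obtain ⟨a1, b1, c1⟩ := enc_decode h0 h1 e1
  obtain ⟨a2, b2, c2⟩ := enc_decode h1 h2 e2
  have m1 : x0 % 8 ≠ x1 % 8 := by omega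
  have m2 : y0 % 8 ≠ y1 % 8 := by omega
  have m3 : y1 % 8 ≠ y2 % 8 := by omega
  exact sc_S2 ⟨x0 % 8, by omega⟩ ⟨x1 % 8, by omega⟩
    ⟨y0 % 8, by omega⟩ ⟨y1 % 8, by omega⟩ ⟨y2 % 8, by omega⟩
    (by simpa [Fin.ext_iff] using m1) (by simpa [Fin.ext_iff] using m2)
    (by simpa [Fin.ext_iff] using m3) ⟨c1, c2⟩

/-! ### The coloring on `Sym2 (Fin r ⊕ Fin d)` -/

def bf (D : ℕ) {r d : ℕ} : (Fin r ⊕ Fin d) → (Fin r ⊕ Fin d) → ℕ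
  | .inl a, .inr b => enc D a b
  | .inr b, .inl a => enc D a b
  | _, _ => 0

lemma bf_symm (D : ℕ) {r d : ℕ} (x y : Fin r ⊕ Fin d) : bf D x y = bf D y x := by
  cases x <;> cases y <;> rfl

def bc (D : ℕ) {r d : ℕ} : Sym2 (Fin r ⊕ Fin d) → ℕ :=
  Sym2.lift ⟨bf D, bf_symm D⟩

@[simp] lemma bc_mk (D : ℕ) {r d : ℕ} (x y : Fin r ⊕ Fin d) :
    bc D s(x, y) = bf D x y := Sym2.lift_mk _ _ _

lemma three_le {α : Type*} [DecidableEq α] {c1 c2 c3 c4 : α}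
    (h12 : c1 ≠ c2) (h23 : c2 ≠ c3) (h34 : c3 ≠ c4) (h : c1 ≠ c3 ∨ c2 ≠ c4) :
    3 ≤ ({c1, c2, c3, c4} : Finset α).card := by
  rcases h with h13 | h24
  · calc (3 : ℕ) = ({c1, c2, c3} : Finset α).card := by
          rw [Finset.card_insert_of_notMem (by simp [h12, h13]),
            Finset.card_insert_of_notMem (by simp [h23]), Finset.card_singleton]
    _ ≤ _ := Finset.card_le_card (by intro x hx; simp at hx ⊢; tauto)
  · calc (3 : ℕ) = ({c2, c3, c4} : Finset α).card := by
          rw [Finset.card_insert_of_notMem (by simp [h23, h24]),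
            Finset.card_insert_of_notMem (by simp [h34]), Finset.card_singleton]
    _ ≤ _ := Finset.card_le_card (by intro x hx; simp at hx ⊢; tauto)

theorem starChromaticIndex_Krd_upper (r d : ℕ) (hr : 1 ≤ r) (hd : 1 ≤ d) :
    starChromaticIndex (completeBipartiteGraph (Fin r) (Fin d)) ≤
      15 * ⌈(d : ℚ) / 8⌉₊ * ⌈(r : ℚ) / 8⌉₊ := by
  set G := completeBipartiteGraph (Fin r) (Fin d) with hG
  set D := ⌈(d : ℚ) / 8⌉₊ with hDdef
  set R := ⌈(r : ℚ) / 8⌉₊ with hRdef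
  have hdD : d ≤ 8 * D := by
    have h1 : (d : ℚ) / 8 ≤ (D : ℚ) := Nat.le_ceil _
    have h2 : (d : ℚ) ≤ 8 * (D : ℚ) := by linarith
    exact_mod_cast h2
  have hrR : r ≤ 8 * R := by
    have h1 : (r : ℚ) / 8 ≤ (R : ℚ) := Nat.le_ceil _
    have h2 : (r : ℚ) ≤ 8 * (R : ℚ) := by linarith
    exact_mod_cast h2
  have hNpos : 0 < 15 * D * R := by
    have : 1 ≤ D := by omega
    have : 1 ≤ R := by omega
    positivity
  -- bounds for the coloring
  have hblt : ∀ b : Fin d, (b : ℕ) / 8 < D := fun b => by have := b.isLt; omega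
  have hbc_lt : ∀ e : Sym2 (Fin r ⊕ Fin d), bc D e < 15 * D * R := by
    intro e
    induction e using Sym2.ind with
    | _ x y =>
      rw [bc_mk]
      rcases x with a | b <;> rcases y with a' | b'
      · simpa [bf] using hNpos
      · exact enc_lt (by have := a.isLt; omega) (hblt b')
      · exact enc_lt (by have := a'.isLt; omega) (hblt b)
      · simpa [bf] using hNpos
  set c : Sym2 (Fin r ⊕ Fin d) → Fin (15 * D * R) := fun e => ⟨bc D e, hbc_lt e⟩ with hc
  have hcne : ∀ e e' : Sym2 (Fin r ⊕ Fin d), bc D e ≠ bc D e' → c e ≠ c e' := by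
    intro e e' h he
    exact h (by simpa [hc, Fin.ext_iff] using he)
  have hcval : ∀ e e' : Sym2 (Fin r ⊕ Fin d), c e = c e' → bc D e = bc D e' := by
    intro e e' h
    simpa [hc, Fin.ext_iff] using h
  -- representation of edges
  have hrep : ∀ e ∈ G.edgeSet, ∃ a b, e = s(Sum.inl a, Sum.inr b) := by
    intro e he
    induction e using Sym2.ind with
    | _ x y =>
      rw [mem_edgeSet] at he
      rcases x with a | b <;> rcases y with a' | b'
      · simp [hG, completeBipartiteGraph] at he
      · exact ⟨a, b', rfl⟩
      · exact ⟨a', b, Sym2.eq_swap⟩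
      · simp [hG, completeBipartiteGraph] at he
  have hadjL : ∀ {a : Fin r} {y : Fin r ⊕ Fin d}, G.Adj (Sum.inl a) y →
      ∃ b, y = Sum.inr b := by
    intro a y hxy
    rcases y with a' | b'
    · simp [hG, completeBipartiteGraph] at hxy
    · exact ⟨b', rfl⟩
  have hadjR : ∀ {b : Fin d} {y : Fin r ⊕ Fin d}, G.Adj (Sum.inr b) y →
      ∃ a, y = Sum.inl a := by
    intro b y hxy
    rcases y with a' | b'
    · exact ⟨a', rfl⟩
    · simp [hG, completeBipartiteGraph] at hxy
  apply Nat.sInf_le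
  refine ⟨c, ?_, ?_⟩
  · -- properness
    intro e1 he1 e2 he2 hne ⟨v, hv1, hv2⟩
    obtain ⟨a, b, rfl⟩ := hrep e1 he1
    obtain ⟨a', b', rfl⟩ := hrep e2 he2
    apply hcne
    show enc D a b ≠ enc D a' b'
    rw [Sym2.mem_iff] at hv1 hv2
    rcases hv1 with rfl | rfl
    · rcases hv2 with h | h
      · obtain rfl : a = a' := Sum.inl_injective h
        have hbb : b ≠ b' := fun hb => hne (by rw [hb])
        exact enc_ne_right (hblt b) (hblt b') (fun hh => hbb (Fin.val_injective hh))
      · exact absurd h (by simp)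
    · rcases hv2 with h | h
      · exact absurd h (by simp)
      · obtain rfl : b = b' := Sum.inr_injective h
        have haa : a ≠ a' := fun ha => hne (by rw [ha])
        exact enc_ne_left (hblt b) (fun hh => haa (Fin.val_injective hh))
  · -- star condition
    intro u v p hlen hnd
    cases p with
    | nil => simp at hlen
    | cons h1 p =>
    cases p with
    | nil => simp at hlen
    | cons h2 p =>
    cases p with
    | nil => simp at hlen
    | cons h3 p =>
    cases p with
    | nil => simp at hlen
    | cons h4 p =>
    cases p with
    | cons h5 p => simp [Walk.length_cons] at hlen
    | nil =>
    simp only [Walk.edges_cons, Walk.edges_nil, List.map_cons, List.map_nil] at hnd ⊢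
    have h12 := (List.nodup_cons.mp hnd).1
    have hnd2 := (List.nodup_cons.mp hnd).2
    have h23 := (List.nodup_cons.mp hnd2).1
    have hnd3 := (List.nodup_cons.mp hnd2).2
    have h34 := (List.nodup_cons.mp hnd3).1
    simp only [List.mem_cons, List.not_mem_nil, or_false, not_or] at h12 h23 h34
    rcases u with a0 | b0
    · obtain ⟨b0, rfl⟩ := hadjL h1
      obtain ⟨a1, rfl⟩ := hadjR h2
      obtain ⟨b1, rfl⟩ := hadjL h3
      obtain ⟨a2, rfl⟩ := hadjR h4
      -- edges: s(inl a0, inr b0), s(inr b0, inl a1), s(inl a1, inr b1), s(inr b1, inl a2)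
      have ha01 : (a0 : ℕ) ≠ (a1 : ℕ) := by
        intro h; apply h12.1
        obtain rfl : a0 = a1 := Fin.val_injective h
        exact Sym2.eq_swap
      have hb01 : (b0 : ℕ) ≠ (b1 : ℕ) := by
        intro h; apply h23.1
        obtain rfl : b0 = b1 := Fin.val_injective h
        exact Sym2.eq_swap
      have ha12 : (a1 : ℕ) ≠ (a2 : ℕ) := by
        intro h; apply h34
        obtain rfl : a1 = a2 := Fin.val_injective h
        exact Sym2.eq_swap
      have hstar := enc_star1 (D := D) (hblt b0) (hblt b1) ha01 ha12 hb01
      have hk12 : c s(Sum.inl a0, Sum.inr b0) ≠ c s(Sum.inr b0, Sum.inl a1) :=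
        hcne _ _ (enc_ne_left (hblt b0) ha01)
      have hk23 : c s(Sum.inr b0, Sum.inl a1) ≠ c s(Sum.inl a1, Sum.inr b1) :=
        hcne _ _ (enc_ne_right (hblt b0) (hblt b1) hb01)
      have hk34 : c s(Sum.inl a1, Sum.inr b1) ≠ c s(Sum.inr b1, Sum.inl a2) :=
        hcne _ _ (enc_ne_left (hblt b1) ha12)
      have hor : c s(Sum.inl a0, Sum.inr b0) ≠ c s(Sum.inl a1, Sum.inr b1) ∨
          c s(Sum.inr b0, Sum.inl a1) ≠ c s(Sum.inr b1, Sum.inl a2) := by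
        by_contra hcon
        push_neg at hcon
        exact hstar ⟨hcval _ _ hcon.1, hcval _ _ hcon.2⟩
      simpa using three_le hk12 hk23 hk34 hor
    · obtain ⟨a0, rfl⟩ := hadjR h1
      obtain ⟨b1, rfl⟩ := hadjL h2
      obtain ⟨a1, rfl⟩ := hadjR h3
      obtain ⟨b2, rfl⟩ := hadjL h4
      -- edges: s(inr b0, inl a0), s(inl a0, inr b1), s(inr b1, inl a1), s(inl a1, inr b2)
      have hb01 : (b0 : ℕ) ≠ (b1 : ℕ) := by
        intro h; apply h12.1
        obtain rfl : b0 = b1 := Fin.val_injective h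
        exact Sym2.eq_swap
      have ha01 : (a0 : ℕ) ≠ (a1 : ℕ) := by
        intro h; apply h23.1
        obtain rfl : a0 = a1 := Fin.val_injective h
        exact Sym2.eq_swap
      have hb12 : (b1 : ℕ) ≠ (b2 : ℕ) := by
        intro h; apply h34
        obtain rfl : b1 = b2 := Fin.val_injective h
        exact Sym2.eq_swap
      have hstar := enc_star2 (D := D) (hblt b0) (hblt b1) (hblt b2) ha01 hb01 hb12
      have hk12 : c s(Sum.inr b0, Sum.inl a0) ≠ c s(Sum.inl a0, Sum.inr b1) :=
        hcne _ _ (enc_ne_right (hblt b0) (hblt b1) hb01)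
      have hk23 : c s(Sum.inl a0, Sum.inr b1) ≠ c s(Sum.inr b1, Sum.inl a1) :=
        hcne _ _ (enc_ne_left (hblt b1) ha01)
      have hk34 : c s(Sum.inr b1, Sum.inl a1) ≠ c s(Sum.inl a1, Sum.inr b2) :=
        hcne _ _ (enc_ne_right (hblt b1) (hblt b2) hb12)
      have hor : c s(Sum.inr b0, Sum.inl a0) ≠ c s(Sum.inr b1, Sum.inl a1) ∨
          c s(Sum.inl a0, Sum.inr b1) ≠ c s(Sum.inl a1, Sum.inr b2) := by
        by_contra hcon
        push_neg at hcon
        exact hstar ⟨hcval _ _ hcon.1, hcval _ _ hcon.2⟩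
      simpa using three_le hk12 hk23 hk34 hor
end

section
/- Every cycle of even length has a star edge coloring with 3 colors. -/
open SimpleGraph

/-!
Colour the edge `{i, i + 1}` of `C_n` by `w i`, for an `n`-periodic sequence `w`. A trail of
four edges in a cycle runs through four consecutive edges, so this is a star edge colouring as
soon as consecutive terms of `w` differ and any four consecutive terms take at least three
values. Such sequences are `0102 0102 …` (period `4`) and `010212 010212 …` (period `6`).
Every `n ≡ 2 (mod 4)` with `n ≥ 10` is handled by the sequence with period `(0102)^k 010212`:
since both blocks begin with `010`, each of its windows of length four is a window of one of
the two previous sequences.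
-/

open Finset Function

section Sequences

open Fin.NatCast

variable {β : Type*}

def cyclicWord {m : ℕ} [NeZero m] (x : Fin m → β) (i : ℕ) : β := x i

theorem periodic_cyclicWord {m : ℕ} [NeZero m] (x : Fin m → β) :
    Periodic (cyclicWord x) m := by
  intro i
  simp [cyclicWord]

def periodicAppend (p q : ℕ) (u v : ℕ → β) (i : ℕ) : β :=
  if i % (p + q) < p then u (i % (p + q)) else v (i % (p + q) - p)

section
variable {p q : ℕ} {u v : ℕ → β} {i : ℕ}

theorem periodic_periodicAppend : Periodic (periodicAppend p q u v) (p + q) := by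
  intro i
  simp [periodicAppend]

theorem periodicAppend_of_lt (h : i < p) : periodicAppend p q u v i = u i := by
  simp [periodicAppend, Nat.mod_eq_of_lt (show i < p + q by omega), h]

theorem periodicAppend_of_le_of_lt (h₁ : p ≤ i) (h₂ : i < p + q) :
    periodicAppend p q u v i = v (i - p) := by
  simp [periodicAppend, Nat.mod_eq_of_lt h₂, h₁]

end

variable [DecidableEq β]

abbrev IsStarWindow (x : Fin 4 → β) : Prop :=
  x 0 ≠ x 1 ∧ 3 ≤ #{x 0, x 1, x 2, x 3}

def window (w : ℕ → β) (i : ℕ) : Fin 4 → β := fun s => w (i + s)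

/-- Read along a cycle, `w i` is the colour of the edge `{i, i + 1}`. -/
def IsStarSeq (w : ℕ → β) : Prop :=
  ∀ i, IsStarWindow (window w i)

theorem IsStarSeq.ne_succ {w : ℕ → β} (hw : IsStarSeq w) (i : ℕ) : w i ≠ w (i + 1) :=
  (hw i).1

theorem IsStarSeq.three_le_card {w : ℕ → β} (hw : IsStarSeq w) (i : ℕ) :
    3 ≤ #{w i, w (i + 1), w (i + 2), w (i + 3)} :=
  (hw i).2

theorem IsStarSeq.of_windows {u v w : ℕ → β} (hu : IsStarSeq u) (hv : IsStarSeq v)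
    (h : ∀ i, ∃ j, window w i = window u j ∨ window w i = window v j) : IsStarSeq w := by
  intro i
  obtain ⟨j, hj | hj⟩ := h i <;> rw [hj]
  exacts [hu j, hv j]

theorem isStarSeq_cyclicWord {m : ℕ} [NeZero m] {x : Fin m → β}
    (hx : ∀ a : Fin m, IsStarWindow fun s : Fin 4 => x (a + (s : ℕ))) :
    IsStarSeq (cyclicWord x) := by
  intro i
  convert hx i using 1
  funext s
  simp [window, cyclicWord]

theorem isStarSeq_periodicAppend {p q : ℕ} {u v : ℕ → β} (hp : 3 ≤ p) (hq : 3 ≤ q)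
    (hup : Periodic u p) (hvq : Periodic v q) (hu : IsStarSeq u) (hv : IsStarSeq v)
    (huv : ∀ i < 3, u i = v i) : IsStarSeq (periodicAppend p q u v) := by
  refine hu.of_windows hv fun i => ?_
  have hshift : ∀ s, periodicAppend p q u v (i + s) =
      periodicAppend p q u v (i % (p + q) + s) := fun s => by
    rw [← periodic_periodicAppend.map_mod_nat (i % (p + q) + s), Nat.mod_add_mod,
      periodic_periodicAppend.map_mod_nat]
  have hrlt : i % (p + q) < p + q := Nat.mod_lt _ (by omega)
  generalize i % (p + q) = r at hshift hrlt
  by_cases hlt : r < p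
  · refine ⟨r, .inl (funext fun s => ?_)⟩
    have hs := s.isLt
    simp only [window, hshift]
    by_cases hrs : r + s < p
    · exact periodicAppend_of_lt hrs
    · rw [periodicAppend_of_le_of_lt (by omega) (by omega), ← huv _ (by omega),
        ← hup (r + s - p), Nat.sub_add_cancel (by omega)]
  · refine ⟨r - p, .inr (funext fun s => ?_)⟩
    have hs := s.isLt
    simp only [window, hshift]
    by_cases hrs : r + s < p + q
    · rw [periodicAppend_of_le_of_lt (by omega) hrs]
      congr 1
      omega
    · rw [show r + s = r + s - (p + q) + (p + q) by omega, periodic_periodicAppend,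
        periodicAppend_of_lt (by omega), huv _ (by omega), ← hvq]
      congr 1
      omega

theorem exists_periodic_isStarSeq_of_even {n : ℕ} (hn : 4 ≤ n) (he : Even n) :
    ∃ w : ℕ → Fin 3, Periodic w n ∧ IsStarSeq w := by
  set w₄ := cyclicWord ![(0 : Fin 3), 1, 0, 2]
  set w₆ := cyclicWord ![(0 : Fin 3), 1, 0, 2, 1, 2]
  have hw₄ : IsStarSeq w₄ := isStarSeq_cyclicWord (by decide)
  have hw₆ : IsStarSeq w₆ := isStarSeq_cyclicWord (by decide)
  obtain ⟨k, rfl⟩ | h4 := em (4 ∣ n)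
  · exact ⟨w₄, by simpa [mul_comm] using (periodic_cyclicWord _).nat_mul k, hw₄⟩
  obtain rfl | h6 := eq_or_ne n 6
  · exact ⟨w₆, periodic_cyclicWord _, hw₆⟩
  have hn2 : n % 2 = 0 := Nat.even_iff.mp he
  obtain ⟨k, hk⟩ : 4 ∣ n - 6 := by omega
  refine ⟨periodicAppend (n - 6) 6 w₄ w₆, ?_, isStarSeq_periodicAppend (by omega) (by norm_num)
    ?_ (periodic_cyclicWord _) hw₄ hw₆ (by decide)⟩
  · simpa [show n - 6 + 6 = n by omega] using
      periodic_periodicAppend (p := n - 6) (q := 6) (u := w₄) (v := w₆)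
  · simpa [hk, mul_comm] using (periodic_cyclicWord _).nat_mul k

end Sequences

section CycleGraph

open Fin.NatCast

variable {n : ℕ}

theorem cycleGraph_adj_iff_eq_add_one {a b : Fin (n + 2)} :
    (cycleGraph (n + 2)).Adj a b ↔ b = a + 1 ∨ a = b + 1 := by
  rw [cycleGraph_adj, sub_eq_iff_eq_add, sub_eq_iff_eq_add, add_comm 1 b, add_comm 1 a, or_comm]

theorem cycleGraph_trail_forward {a b d : Fin (n + 2)} (hab : b = a + 1)
    (hbd : (cycleGraph (n + 2)).Adj b d) (hne : s(a, b) ≠ s(b, d)) : d = b + 1 := by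
  refine (cycleGraph_adj_iff_eq_add_one.mp hbd).resolve_right fun hdb => hne ?_
  rw [hab, add_right_cancel (hdb.symm.trans hab), Sym2.eq_swap]

theorem cycleGraph_trail_backward {a b d : Fin (n + 2)} (hab : a = b + 1)
    (hbd : (cycleGraph (n + 2)).Adj b d) (hne : s(a, b) ≠ s(b, d)) : b = d + 1 := by
  refine (cycleGraph_adj_iff_eq_add_one.mp hbd).resolve_left fun hdb => hne ?_
  rw [hab, hdb, Sym2.eq_swap]

def cycleEdge (m : ℕ) [NeZero m] (i : ℕ) : Sym2 (Fin m) := s((i : Fin m), ((i + 1 : ℕ) : Fin m))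

theorem cycleEdge_val (a : Fin (n + 2)) : cycleEdge (n + 2) a = s(a, a + 1) := by
  simp [cycleEdge]

theorem cycleEdge_val_add_one (a : Fin (n + 2)) :
    cycleEdge (n + 2) ((a : ℕ) + 1) = s(a + 1, a + 1 + 1) := by
  simp [cycleEdge]

theorem cycleGraph_exists_eq_of_mem_edgeSet {e : Sym2 (Fin (n + 2))}
    (he : e ∈ (cycleGraph (n + 2)).edgeSet) : ∃ a : Fin (n + 2), e = s(a, a + 1) := by
  induction e using Sym2.ind with
  | _ a b =>
    rcases cycleGraph_adj_iff_eq_add_one.mp (mem_edgeSet _ |>.mp he) with rfl | rfl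
    exacts [⟨a, rfl⟩, ⟨b, Sym2.eq_swap⟩]

theorem cycleGraph_consecutive_of_adjacent_edges {e₁ e₂ : Sym2 (Fin (n + 2))}
    (he₁ : e₁ ∈ (cycleGraph (n + 2)).edgeSet) (he₂ : e₂ ∈ (cycleGraph (n + 2)).edgeSet)
    (hne : e₁ ≠ e₂) (hv : ∃ v, v ∈ e₁ ∧ v ∈ e₂) :
    ∃ i, (e₁ = cycleEdge (n + 2) i ∧ e₂ = cycleEdge (n + 2) (i + 1)) ∨
      (e₁ = cycleEdge (n + 2) (i + 1) ∧ e₂ = cycleEdge (n + 2) i) := by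
  obtain ⟨a, rfl⟩ := cycleGraph_exists_eq_of_mem_edgeSet he₁
  obtain ⟨b, rfl⟩ := cycleGraph_exists_eq_of_mem_edgeSet he₂
  obtain ⟨v, hva, hvb⟩ := hv
  rw [Sym2.mem_iff] at hva hvb
  rcases hva with rfl | rfl <;> rcases hvb with hb | hb
  · exact absurd (by rw [hb]) hne
  · subst hb
    exact ⟨b, .inr ⟨(cycleEdge_val_add_one b).symm, (cycleEdge_val b).symm⟩⟩
  · subst hb
    exact ⟨a, .inl ⟨(cycleEdge_val a).symm, (cycleEdge_val_add_one a).symm⟩⟩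
  · exact absurd (by rw [add_right_cancel hb]) hne

theorem cycleGraph_edges_toFinset_of_length_eq_four {u v : Fin (n + 2)}
    (p : (cycleGraph (n + 2)).Walk u v) (hlen : p.length = 4) (hnd : p.edges.Nodup) :
    ∃ i : ℕ, p.edges.toFinset = {cycleEdge (n + 2) i, cycleEdge (n + 2) (i + 1),
      cycleEdge (n + 2) (i + 2), cycleEdge (n + 2) (i + 3)} := by
  rcases p with _ | ⟨h₁, _ | ⟨h₂, _ | ⟨h₃, _ | ⟨h₄, _ | ⟨_, _⟩⟩⟩⟩⟩ <;> simp at hlen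
  simp only [Walk.edges_cons, Walk.edges_nil, List.nodup_cons, List.mem_cons, not_or] at hnd
  obtain ⟨⟨h₁₂, -⟩, ⟨h₂₃, -⟩, ⟨h₃₄, -⟩, -⟩ := hnd
  rcases cycleGraph_adj_iff_eq_add_one.mp h₁ with rfl | rfl
  · obtain rfl := cycleGraph_trail_forward rfl h₂ h₁₂
    obtain rfl := cycleGraph_trail_forward rfl h₃ h₂₃
    obtain rfl := cycleGraph_trail_forward rfl h₄ h₃₄
    refine ⟨u, ?_⟩
    norm_num [cycleEdge, add_assoc]
  · obtain rfl := cycleGraph_trail_backward rfl h₂ h₁₂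
    obtain rfl := cycleGraph_trail_backward rfl h₃ h₂₃
    obtain rfl := cycleGraph_trail_backward rfl h₄ h₃₄
    refine ⟨v, ?_⟩
    rw [← List.toFinset_reverse]
    norm_num [cycleEdge, add_assoc]
    rw [Sym2.eq_swap (a := v + 1) (b := v), Sym2.eq_swap (a := v + 2), Sym2.eq_swap (a := v + 3),
      Sym2.eq_swap (a := v + 4)]

theorem injective_sym2_mk_add_one : Injective fun a : Fin (n + 3) => s(a, a + 1) := by
  intro a b h
  rcases Sym2.eq_iff.mp h with ⟨h, -⟩ | ⟨rfl, hb⟩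
  · exact h
  · rw [add_assoc, add_eq_left, one_add_one_eq_two] at hb
    simp [Fin.ext_iff, Nat.mod_eq_of_lt (show 2 < n + 3 by omega)] at hb

variable {β : Type*} [DecidableEq β]

theorem isStarEdgeColoring_cycleGraph {w : ℕ → β} (hw : IsStarSeq w)
    {c : Sym2 (Fin (n + 2)) → β} (hc : ∀ i, c (cycleEdge (n + 2) i) = w i) :
    IsStarEdgeColoring (cycleGraph (n + 2)) c := by
  refine ⟨fun e₁ he₁ e₂ he₂ hne hv => ?_, fun u v p hlen hnd => ?_⟩
  · obtain ⟨i, ⟨rfl, rfl⟩ | ⟨rfl, rfl⟩⟩ :=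
      cycleGraph_consecutive_of_adjacent_edges he₁ he₂ hne hv
    · rw [hc, hc]
      exact hw.ne_succ i
    · rw [hc, hc]
      exact (hw.ne_succ i).symm
  · obtain ⟨i, hi⟩ := cycleGraph_edges_toFinset_of_length_eq_four p hlen hnd
    rw [show (p.edges.map c).toFinset = p.edges.toFinset.image c by ext; simp, hi]
    simpa only [image_insert, image_singleton, hc] using hw.three_le_card i

theorem exists_isStarEdgeColoring_cycleGraph {w : ℕ → β} (hp : Periodic w (n + 3))
    (hw : IsStarSeq w) :
    ∃ c : Sym2 (Fin (n + 3)) → β, IsStarEdgeColoring (cycleGraph (n + 3)) c := by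
  refine ⟨extend (fun a : Fin (n + 3) => s(a, a + 1)) (fun a => w a) (fun _ => w 0),
    isStarEdgeColoring_cycleGraph hw fun i => ?_⟩
  rw [cycleEdge, Nat.cast_succ, injective_sym2_mk_add_one.extend_apply, Fin.val_natCast,
    hp.map_mod_nat]

end CycleGraph

theorem even_cycle_star_three (n : ℕ) (hn : 3 ≤ n) (he : Even n) :
    ∃ c : Sym2 (Fin n) → Fin 3, IsStarEdgeColoring (cycleGraph n) c := by
  obtain ⟨w, hp, hw⟩ := exists_periodic_isStarSeq_of_even (by grind) he
  obtain ⟨m, rfl⟩ : ∃ m, n = m + 3 := ⟨n - 3, by omega⟩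
  exact exists_isStarEdgeColoring_cycleGraph hp hw
end

section
/- Every cycle C_n with n ≠ 5 is star 3-edge-choosable: for every assignment L of lists of at least 3 colors to the edges of C_n, there is a star edge coloring φ of C_n with φ(e) ∈ L(e) for every edge e. -/
open SimpleGraph

/-!
Write `g i` for the color of the edge `s(i, i + 1)`. Choosing colors greedily along the cycle,
each edge avoiding the colors of the two edges before it, is always possible from lists of size
three, and gives a proper coloring with `g (k + 2) ≠ g k`, hence no bicolored path on four edges,
away from the place where the cycle closes up. For `n ≥ 6` the last three edges are colored so
that the positions `k` where `g (k + 2) = g k` is still possible are pairwise non-consecutive,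
which is all that is needed; `n = 3` and `n = 4` are checked directly.
-/

open Finset Function

variable {α : Type*}

theorem Finset.exists_mem_ne_ne [DecidableEq α] {s : Finset α} (hs : 3 ≤ #s) (a b : α) :
    ∃ c ∈ s, c ≠ a ∧ c ≠ b := by
  obtain ⟨c, hc⟩ : ((s.erase a).erase b).Nonempty := by
    rw [← card_pos]
    have := pred_card_le_card_erase (s := s) (a := a)
    have := pred_card_le_card_erase (s := s.erase a) (a := b)
    omega
  simp only [mem_erase] at hc
  exact ⟨c, hc.2.2, hc.2.1, hc.1⟩

def seqRec₂ (next : ℕ → α → α → α) (a b : α) : ℕ → α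
  | 0 => a
  | 1 => b
  | k + 2 => next (k + 2) (seqRec₂ next a b (k + 1)) (seqRec₂ next a b k)

theorem exists_seq_mem_ne_succ_ne_add_two [DecidableEq α] {L : ℕ → Finset α}
    (hL : ∀ k, 3 ≤ #(L k)) :
    ∃ c : ℕ → α, ∀ k, c k ∈ L k ∧ c (k + 1) ≠ c k ∧ c (k + 2) ≠ c k := by
  choose next hnext using fun k => Finset.exists_mem_ne_ne (hL k)
  obtain ⟨a, ha⟩ := card_pos.1 (zero_lt_three.trans_le (hL 0))
  obtain ⟨b, hb, hba, -⟩ := Finset.exists_mem_ne_ne (hL 1) a a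
  refine ⟨seqRec₂ next a b, fun k => ⟨?_, ?_, (hnext _ _ _).2.2⟩⟩
  · rcases k with _ | _ | k
    exacts [ha, hb, (hnext _ _ _).1]
  · rcases k with _ | k
    exacts [hba, (hnext _ _ _).2.1]

variable {n : ℕ} [NeZero n]

/-- `g i` is the color of the edge `s(i, i + 1)` of the cycle on `Fin n`. -/
def IsStarCycleColoring (g : Fin n → α) : Prop :=
  ∀ i, g (i + 1) ≠ g i ∧ (g (i + 1 + 1) = g i → g (i + 1 + 1 + 1) ≠ g (i + 1))

theorem Function.Periodic.apply_val_add_one_add {G : ℕ → α} (hG : Periodic G n) (i : Fin n)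
    (t : ℕ) : G ((i + 1 : Fin n) + t) = G (i + (t + 1)) := by
  rw [← hG.map_mod_nat, ← hG.map_mod_nat (i + (t + 1)), Fin.val_add, Fin.val_one', Nat.mod_add_mod,
    Nat.add_right_comm, Nat.add_mod_mod, Nat.add_assoc]

theorem Function.Periodic.isStarCycleColoring {G : ℕ → α} (hG : Periodic G n)
    (h : ∀ k < n, G (k + 1) ≠ G k ∧ (G (k + 2) = G k → G (k + 3) ≠ G (k + 1))) :
    IsStarCycleColoring fun i : Fin n => G i := by
  intro i
  have e1 : G ↑(i + 1) = G (↑i + 1) := by simpa using hG.apply_val_add_one_add i 0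
  have e2 : G ↑(i + 1 + 1) = G (↑i + 2) := by
    simpa using (hG.apply_val_add_one_add (i + 1) 0).trans (hG.apply_val_add_one_add i 1)
  have e3 : G ↑(i + 1 + 1 + 1) = G (↑i + 3) := by
    simpa using ((hG.apply_val_add_one_add (i + 1 + 1) 0).trans
      (hG.apply_val_add_one_add (i + 1) 1)).trans (hG.apply_val_add_one_add i 2)
  simpa only [e1, e2, e3] using h i i.is_lt

open Fin.NatCast in
theorem exists_isStarCycleColoring_of_six_le [DecidableEq α] (hn : 6 ≤ n) (M : Fin n → Finset α)
    (hM : ∀ i, 3 ≤ #(M i)) : ∃ g : Fin n → α, (∀ i, g i ∈ M i) ∧ IsStarCycleColoring g := by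
  obtain ⟨m, rfl⟩ : ∃ m, n = m + 6 := ⟨n - 6, by omega⟩
  obtain ⟨c, hc⟩ := exists_seq_mem_ne_succ_ne_add_two fun k => hM k
  obtain ⟨u, hu, huc, huc₀⟩ := exists_mem_ne_ne (hM (m + 4 : ℕ)) (c (m + 2)) (c 0)
  obtain ⟨v, hv, hvu, hvc₀⟩ := exists_mem_ne_ne (hM (m + 5 : ℕ)) u (c 0)
  obtain ⟨x, hx, hxc, hxu⟩ := exists_mem_ne_ne (hM (m + 3 : ℕ)) (c (m + 2)) u
  set Y : ℕ → α := fun j =>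
    if j ≤ m + 2 then c j else if j = m + 3 then x else if j = m + 4 then u else v with hY
  set G : ℕ → α := fun k => Y (k % (m + 6)) with hG
  have hGY : ∀ k < m + 6, G k = Y k := fun k hk => by simp only [hG, Nat.mod_eq_of_lt hk]
  have hGc : ∀ j ≤ 2, G (m + 6 + j) = c j := fun j hj => by
    simp only [hG, hY, Nat.add_mod_left, Nat.mod_eq_of_lt (show j < m + 6 by omega)]
    rw [if_pos (by omega)]
  have hG6 : G (m + 6) = c 0 := hGc 0 (by omega)
  have hG7 : G (m + 7) = c 1 := hGc 1 (by omega)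
  have hG8 : G (m + 8) = c 2 := hGc 2 (by omega)
  have hper : Periodic G (m + 6) := fun k => by simp only [hG, Nat.add_mod_right]
  have hYM : ∀ j < m + 6, Y j ∈ M j := fun j hj => by
    rcases (by omega : j ≤ m + 2 ∨ j = m + 3 ∨ j = m + 4 ∨ j = m + 5) with hj | rfl | rfl | rfl <;>
      simp (disch := omega) only [hY, if_pos, if_neg, ite_true]
    exacts [(hc j).1, hx, hu, hv]
  refine ⟨fun i => G i, fun i => by simpa [hGY _ i.is_lt] using hYM i i.is_lt,
    hper.isStarCycleColoring fun k hk => ?_⟩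
  -- `G (k + 2) = G k` is possible only for `k ∈ {m + 1, m + 3, m + 5}` (mod `m + 6`).
  rcases (by omega : k ≤ m ∨ k = m + 1 ∨ k = m + 2 ∨ k = m + 3 ∨ k = m + 4 ∨ k = m + 5)
    with hk | rfl | rfl | rfl | rfl | rfl <;>
    simp (disch := omega) only [Nat.add_assoc, Nat.reduceAdd, hGY, hG6, hG7, hG8, hY, if_pos,
      if_neg, ite_true]
  exacts [⟨(hc k).2.1, fun h => absurd h (hc k).2.2⟩, ⟨(hc (m + 1)).2.1, fun _ => huc⟩,
    ⟨hxc, fun h => absurd h huc⟩, ⟨hxu.symm, fun _ => huc₀.symm⟩,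
    ⟨hvu, fun h => absurd h.symm huc₀⟩, ⟨hvc₀.symm, fun _ => (hc 0).2.2⟩]

theorem exists_isStarCycleColoring_three [DecidableEq α] (M : Fin 3 → Finset α)
    (hM : ∀ i, 3 ≤ #(M i)) : ∃ g : Fin 3 → α, (∀ i, g i ∈ M i) ∧ IsStarCycleColoring g := by
  obtain ⟨a, ha⟩ := card_pos.1 (zero_lt_three.trans_le (hM 0))
  obtain ⟨b, hb, hba, -⟩ := exists_mem_ne_ne (hM 1) a a
  obtain ⟨c, hc, hca, hcb⟩ := exists_mem_ne_ne (hM 2) a b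
  refine ⟨![a, b, c], fun i => ?_, fun i => ?_⟩ <;> fin_cases i <;> simp [*, Ne.symm]

theorem exists_isStarCycleColoring_four [DecidableEq α] (M : Fin 4 → Finset α)
    (hM : ∀ i, 3 ≤ #(M i)) : ∃ g : Fin 4 → α, (∀ i, g i ∈ M i) ∧ IsStarCycleColoring g := by
  obtain ⟨a, ha⟩ := card_pos.1 (zero_lt_three.trans_le (hM 0))
  obtain ⟨b, hb, hba, -⟩ := exists_mem_ne_ne (hM 1) a a
  obtain ⟨c, hc, hcb, hca⟩ := exists_mem_ne_ne (hM 2) b a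
  obtain ⟨d, hd, hdc, hda⟩ := exists_mem_ne_ne (hM 3) c a
  refine ⟨![a, b, c, d], fun i => ?_, fun i => ?_⟩ <;> fin_cases i <;> simp [*, Ne.symm]

theorem exists_isStarCycleColoring [DecidableEq α] (hn : 3 ≤ n) (h5 : n ≠ 5) (M : Fin n → Finset α)
    (hM : ∀ i, 3 ≤ #(M i)) : ∃ g : Fin n → α, (∀ i, g i ∈ M i) ∧ IsStarCycleColoring g := by
  obtain rfl | rfl | h6 : n = 3 ∨ n = 4 ∨ 6 ≤ n := by omega
  exacts [exists_isStarCycleColoring_three M hM, exists_isStarCycleColoring_four M hM,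
    exists_isStarCycleColoring_of_six_le h6 M hM]

theorem three_le_card_toFinset_of_ne [DecidableEq α] {a b c d : α} (hab : b ≠ a) (hbc : c ≠ b)
    (hcd : d ≠ c) (h : c = a → d ≠ b) : 3 ≤ [a, b, c, d].toFinset.card := by
  by_cases hca : c = a
  · exact two_lt_card.2 ⟨b, by simp, c, by simp, d, by simp, hbc.symm, (h hca).symm, hcd.symm⟩
  · exact two_lt_card.2 ⟨a, by simp, b, by simp, c, by simp, hab.symm, Ne.symm hca, hbc.symm⟩

theorem Fin.sym2_mk_add_one_inj (hn : 2 < n) {i j : Fin n} :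
    s(i, i + 1) = s(j, j + 1) ↔ i = j := by
  refine ⟨fun h => ?_, fun h => h ▸ rfl⟩
  rcases Sym2.eq_iff.1 h with ⟨h, -⟩ | ⟨rfl, h⟩
  · exact h
  · rw [add_assoc, add_eq_left, Fin.ext_iff, Fin.val_add, Fin.val_one',
      Nat.mod_eq_of_lt (by omega : 1 < n), Nat.mod_eq_of_lt hn] at h
    exact absurd h two_ne_zero

theorem exists_apply_sym2_mk_add_one_eq (hn : 2 < n) (g : Fin n → α) :
    ∃ c : Sym2 (Fin n) → α, ∀ i, c s(i, i + 1) = g i :=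
  ⟨fun e => g (Classical.epsilon fun i => s(i, i + 1) = e),
    fun i => congrArg g ((Fin.sym2_mk_add_one_inj hn).1
      (Classical.epsilon_spec (p := fun j => s(j, j + 1) = s(i, i + 1)) ⟨i, rfl⟩))⟩

namespace SimpleGraph

theorem cycleGraph_adj_iff_eq_add_one (hn : 1 < n) {a b : Fin n} :
    (cycleGraph n).Adj a b ↔ b = a + 1 ∨ a = b + 1 := by
  have h1 : ((1 : Fin n) : ℕ) = 1 := by rw [Fin.val_one', Nat.mod_eq_of_lt hn]
  rw [cycleGraph_adj', ← h1, ← Fin.ext_iff, ← Fin.ext_iff, sub_eq_iff_eq_add', sub_eq_iff_eq_add',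
    or_comm]

theorem mem_edgeSet_cycleGraph (hn : 1 < n) {e : Sym2 (Fin n)} :
    e ∈ (cycleGraph n).edgeSet ↔ ∃ i, s(i, i + 1) = e := by
  induction e using Sym2.ind with
  | h a b =>
    rw [mem_edgeSet, cycleGraph_adj_iff_eq_add_one hn]
    constructor
    · rintro (rfl | rfl)
      exacts [⟨a, rfl⟩, ⟨b, Sym2.eq_swap⟩]
    · rintro ⟨i, h⟩
      rcases Sym2.eq_iff.1 h with ⟨rfl, rfl⟩ | ⟨rfl, rfl⟩
      exacts [Or.inl rfl, Or.inr rfl]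

theorem cycleGraph.eq_add_one_of_adj (hn : 1 < n) {x y z : Fin n} (hyz : (cycleGraph n).Adj y z)
    (hxy : y = x + 1) (hne : s(x, y) ≠ s(y, z)) : z = y + 1 := by
  refine ((cycleGraph_adj_iff_eq_add_one hn).1 hyz).resolve_right fun h => hne ?_
  rw [hxy, add_right_cancel (hxy.symm.trans h), Sym2.eq_swap]

theorem cycleGraph.add_one_eq_of_adj (hn : 1 < n) {x y z : Fin n} (hyz : (cycleGraph n).Adj y z)
    (hxy : x = y + 1) (hne : s(x, y) ≠ s(y, z)) : y = z + 1 := by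
  refine ((cycleGraph_adj_iff_eq_add_one hn).1 hyz).resolve_left fun h => hne ?_
  rw [hxy, ← h, Sym2.eq_swap]

end SimpleGraph

namespace IsStarCycleColoring

open SimpleGraph

variable {g : Fin n → α} {c : Sym2 (Fin n) → α}

theorem apply_ne_of_adjacent (hn : 1 < n) (hg : IsStarCycleColoring g)
    (hc : ∀ i, c s(i, i + 1) = g i) {e₁ e₂ : Sym2 (Fin n)} (he₁ : e₁ ∈ (cycleGraph n).edgeSet)
    (he₂ : e₂ ∈ (cycleGraph n).edgeSet) (hne : e₁ ≠ e₂) (hv : ∃ v, v ∈ e₁ ∧ v ∈ e₂) :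
    c e₁ ≠ c e₂ := by
  obtain ⟨i, rfl⟩ := (mem_edgeSet_cycleGraph hn).1 he₁
  obtain ⟨j, rfl⟩ := (mem_edgeSet_cycleGraph hn).1 he₂
  obtain ⟨v, hvi, hvj⟩ := hv
  rw [hc, hc]
  rcases Sym2.mem_iff.1 hvi with rfl | rfl <;> rcases Sym2.mem_iff.1 hvj with hj | hj
  · exact absurd (hj ▸ rfl) hne
  · exact hj ▸ (hg j).1
  · exact hj ▸ (hg i).1.symm
  · exact absurd (add_right_cancel hj ▸ rfl) hne

theorem three_le_card_map_edges [DecidableEq α] (hn : 1 < n)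
    (hg : IsStarCycleColoring g) (hc : ∀ i, c s(i, i + 1) = g i) {u v : Fin n}
    (p : (cycleGraph n).Walk u v) (hp : p.length = 4) (hnd : p.edges.Nodup) :
    3 ≤ (p.edges.map c).toFinset.card := by
  rcases p with _ | ⟨h₁, _ | ⟨h₂, _ | ⟨h₃, _ | ⟨h₄, _ | ⟨_, _⟩⟩⟩⟩⟩ <;>
    simp only [Walk.length_cons, Walk.length_nil] at hp <;> try omega
  rename_i a b d
  -- a trail in a cycle never turns back, so it runs along consecutive edges in one direction
  simp only [Walk.edges_cons, Walk.edges_nil, List.map_cons, List.map_nil, List.nodup_cons,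
    List.mem_cons, List.not_mem_nil, or_false, not_or] at hnd ⊢
  obtain ⟨⟨h12, -, -⟩, ⟨h23, -⟩, h34, -⟩ := hnd
  rcases (cycleGraph_adj_iff_eq_add_one hn).1 h₁ with rfl | rfl
  · obtain rfl := cycleGraph.eq_add_one_of_adj hn h₂ rfl h12
    obtain rfl := cycleGraph.eq_add_one_of_adj hn h₃ rfl h23
    obtain rfl := cycleGraph.eq_add_one_of_adj hn h₄ rfl h34
    simp only [hc]
    exact three_le_card_toFinset_of_ne (hg u).1 (hg (u + 1)).1 (hg (u + 1 + 1)).1 (hg u).2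
  · obtain rfl := cycleGraph.add_one_eq_of_adj hn h₂ rfl h12
    obtain rfl := cycleGraph.add_one_eq_of_adj hn h₃ rfl h23
    obtain rfl := cycleGraph.add_one_eq_of_adj hn h₄ rfl h34
    have hc' : ∀ i, c s(i + 1, i) = g i := fun i => Sym2.eq_swap (a := i) ▸ hc i
    simp only [hc']
    rw [← List.toFinset_reverse]
    exact three_le_card_toFinset_of_ne (hg v).1 (hg (v + 1)).1 (hg (v + 1 + 1)).1 (hg v).2

theorem isStarEdgeColoring [DecidableEq α] (hn : 1 < n)
    (hg : IsStarCycleColoring g) (hc : ∀ i, c s(i, i + 1) = g i) :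
    IsStarEdgeColoring (cycleGraph n) c :=
  ⟨fun _ he₁ _ he₂ => hg.apply_ne_of_adjacent hn hc he₁ he₂,
    fun _ _ p hp hnd => hg.three_le_card_map_edges hn hc p hp hnd⟩

end IsStarCycleColoring

theorem cycle_star_three_choosable (n : ℕ) (hn : 3 ≤ n) (h5 : n ≠ 5)
    (L : Sym2 (Fin n) → Finset ℕ)
    (hL : ∀ e ∈ (cycleGraph n).edgeSet, 3 ≤ (L e).card) :
    ∃ c : Sym2 (Fin n) → ℕ, IsStarEdgeColoring (cycleGraph n) c ∧
      ∀ e ∈ (cycleGraph n).edgeSet, c e ∈ L e := by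
  have : NeZero n := ⟨by omega⟩
  have hedge (i : Fin n) : s(i, i + 1) ∈ (cycleGraph n).edgeSet :=
    (mem_edgeSet_cycleGraph (by omega)).2 ⟨i, rfl⟩
  obtain ⟨g, hgL, hg⟩ :=
    exists_isStarCycleColoring hn h5 (fun i => L s(i, i + 1)) fun i => hL _ (hedge i)
  obtain ⟨c, hc⟩ := exists_apply_sym2_mk_add_one_eq (by omega) g
  refine ⟨c, hg.isStarEdgeColoring (by omega) hc, fun e he => ?_⟩
  obtain ⟨i, rfl⟩ := (mem_edgeSet_cycleGraph (by omega)).1 he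
  exact hc i ▸ hgL i
end

section
/- There exists a (2,3)-biregular bipartite graph whose star chromatic index equals 4. -/
/-!
In the paper's graph, `u₁ u₂ v₁ v₂` is a 4-cycle, with pendant edges `u₂u₃` at `u₂` and `v₂v₃`
at `v₂`. A star edge coloring with three colors must give the 4-cycle three colors, so exactly
one pair of opposite edges of the cycle shares a color. The pendant edge at the end of the other
pair then has to take the repeated color, and that creates a bicolored path on four edges. An
explicit star edge coloring with four colors gives the matching upper bound.
-/

open SimpleGraph

section Bipartite

variable {α β γ : Type*}

def bipartiteGraphOfRel (r : α → β → Prop) : SimpleGraph (α ⊕ β) where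
  Adj
  | .inl x, .inr y | .inr y, .inl x => r x y
  | _, _ => False
  symm := ⟨fun | .inl _, .inr _, h | .inr _, .inl _, h => h⟩
  loopless := ⟨fun | .inl _, h | .inr _, h => h⟩

instance (r : α → β → Prop) [DecidableRel r] : DecidableRel (bipartiteGraphOfRel r).Adj
  | .inl x, .inr y | .inr y, .inl x => inferInstanceAs (Decidable (r x y))
  | .inl _, .inl _ | .inr _, .inr _ => inferInstanceAs (Decidable False)

theorem bipartiteGraphOfRel_le (r : α → β → Prop) :
    bipartiteGraphOfRel r ≤ completeBipartiteGraph α β := by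
  rintro (_ | _) (_ | _) h
  all_goals first | exact h.elim | simp

theorem ncard_neighborSet_inl_bipartiteGraphOfRel (r : α → β → Prop) (x : α) :
    ((bipartiteGraphOfRel r).neighborSet (.inl x)).ncard = {y | r x y}.ncard := by
  have : (bipartiteGraphOfRel r).neighborSet (.inl x) = Sum.inr '' {y | r x y} := by
    ext (_ | _) <;> simp [bipartiteGraphOfRel]
  rw [this, Set.ncard_image_of_injective _ Sum.inr_injective]

theorem ncard_neighborSet_inr_bipartiteGraphOfRel (r : α → β → Prop) (y : β) :
    ((bipartiteGraphOfRel r).neighborSet (.inr y)).ncard = {x | r x y}.ncard := by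
  have : (bipartiteGraphOfRel r).neighborSet (.inr y) = Sum.inl '' {x | r x y} := by
    ext (_ | _) <;> simp [bipartiteGraphOfRel]
  rw [this, Set.ncard_image_of_injective _ Sum.inl_injective]

/-- `d` is the value on pairs that do not cross the bipartition. -/
def Sym2.liftSum (f : α → β → γ) (d : γ) : Sym2 (α ⊕ β) → γ :=
  Sym2.lift ⟨fun
    | .inl x, .inr y | .inr y, .inl x => f x y
    | _, _ => d, by rintro (_ | _) (_ | _) <;> rfl⟩

end Bipartite

section StarEdgeColoring

variable {V β γ : Type*} {G : SimpleGraph V}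

theorem isStarEdgeColoring_iff_s16 [DecidableEq β] (c : Sym2 V → β) :
    IsStarEdgeColoring G c ↔
      (∀ ⦃e₁⦄, e₁ ∈ G.edgeSet → ∀ ⦃e₂⦄, e₂ ∈ G.edgeSet → e₁ ≠ e₂ →
        (∃ v, v ∈ e₁ ∧ v ∈ e₂) → c e₁ ≠ c e₂) ∧
      ∀ v₀ v₁, G.Adj v₀ v₁ → ∀ v₂, G.Adj v₁ v₂ → ∀ v₃, G.Adj v₂ v₃ → ∀ v₄, G.Adj v₃ v₄ →
        [s(v₀, v₁), s(v₁, v₂), s(v₂, v₃), s(v₃, v₄)].Nodup →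
        3 ≤ ([s(v₀, v₁), s(v₁, v₂), s(v₂, v₃), s(v₃, v₄)].map c).toFinset.card := by
  refine and_congr_right fun _ => ⟨fun h v₀ v₁ h₀₁ v₂ h₁₂ v₃ h₂₃ v₄ h₃₄ =>
    h _ _ (.cons h₀₁ (.cons h₁₂ (.cons h₂₃ (.cons h₃₄ .nil)))) rfl, fun h u v p hp => ?_⟩
  match p, hp with
  | .cons h₀₁ (.cons h₁₂ (.cons h₂₃ (.cons h₃₄ .nil))), _ => exact h _ _ h₀₁ _ h₁₂ _ h₂₃ _ h₃₄

theorem IsStarEdgeColoring.comp_injective [DecidableEq β] [DecidableEq γ] {c : Sym2 V → β}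
    (hc : IsStarEdgeColoring G c) {f : β → γ} (hf : f.Injective) :
    IsStarEdgeColoring G (f ∘ c) := by
  refine ⟨fun e₁ he₁ e₂ he₂ hne hshare => hf.ne (hc.1 he₁ he₂ hne hshare), fun u v p hl hp => ?_⟩
  have : (p.edges.map (f ∘ c)).toFinset = (p.edges.map c).toFinset.image f := by
    ext
    simp
  rw [this, Finset.card_image_of_injective _ hf]
  exact hc.2 u v p hl hp

theorem starChromaticIndex_eq_succ {n : ℕ} (c : Sym2 V → Fin (n + 1))
    (hc : IsStarEdgeColoring G c) (h : ∀ c : Sym2 V → Fin n, ¬IsStarEdgeColoring G c) :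
    starChromaticIndex G = n + 1 := by
  refine le_antisymm (Nat.sInf_le ⟨c, hc⟩) (le_csInf ⟨_, c, hc⟩ ?_)
  rintro m ⟨c', hc'⟩
  by_contra! hm
  exact h _ (hc'.comp_injective (Fin.castLE_injective (Nat.le_of_lt_succ hm)))

end StarEdgeColoring

/-- The paper's graph, with `X = (u₁, u₃, u₅, v₁, v₃, v₅)` as `Fin 6` and
`Y = (u₂, u₄, v₂, v₄)` as `Fin 4`. -/
abbrev crossedPathsGraph : SimpleGraph (Fin 6 ⊕ Fin 4) :=
  bipartiteGraphOfRel fun x y =>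
    y ∈ (![{0, 2}, {0, 1}, {1, 3}, {2, 0}, {2, 3}, {3, 1}] x : Finset (Fin 4))

theorem ncard_neighborSet_inl_crossedPathsGraph (x : Fin 6) :
    (crossedPathsGraph.neighborSet (.inl x)).ncard = 2 := by
  rw [crossedPathsGraph, ncard_neighborSet_inl_bipartiteGraphOfRel, Set.ncard_eq_toFinset_card']
  revert x
  decide

theorem ncard_neighborSet_inr_crossedPathsGraph (y : Fin 4) :
    (crossedPathsGraph.neighborSet (.inr y)).ncard = 3 := by
  rw [crossedPathsGraph, ncard_neighborSet_inr_bipartiteGraphOfRel, Set.ncard_eq_toFinset_card']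
  revert y
  decide

/-- Entries at non-edges are irrelevant. -/
def crossedPathsColoring : Sym2 (Fin 6 ⊕ Fin 4) → Fin 4 :=
  Sym2.liftSum ![![0, 0, 1, 0], ![1, 2, 0, 0], ![0, 0, 0, 1], ![3, 0, 2, 0], ![0, 0, 3, 0],
    ![0, 3, 0, 2]] 0

set_option synthInstance.maxSize 1000 in
theorem isStarEdgeColoring_crossedPathsColoring :
    IsStarEdgeColoring crossedPathsGraph crossedPathsColoring :=
  (isStarEdgeColoring_iff_s16 _).2 ⟨by decide, by decide⟩

set_option synthInstance.maxSize 1000 in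
/-- `a b c d` are the colors around a 4-cycle, `x` that of a pendant edge at the common vertex of
`a` and `b`, and `y` that of one at the common vertex of `c` and `d`. -/
theorem fin_three_square_with_pendants_false : ∀ a b c d x y : Fin 3,
    a ≠ b → b ≠ c → c ≠ d → d ≠ a → a ≠ x → b ≠ x → c ≠ y → d ≠ y →
    3 ≤ [a, b, c, d].toFinset.card → 3 ≤ [y, d, a, b].toFinset.card →
    3 ≤ [c, d, a, x].toFinset.card → False := by
  decide

theorem not_isStarEdgeColoring_crossedPathsGraph_fin_three (c : Sym2 (Fin 6 ⊕ Fin 4) → Fin 3) :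
    ¬IsStarEdgeColoring crossedPathsGraph c := by
  rw [isStarEdgeColoring_iff_s16]
  rintro ⟨proper, paths⟩
  refine fin_three_square_with_pendants_false (c s(.inl 0, .inr 0)) (c s(.inr 0, .inl 3))
    (c s(.inl 3, .inr 2)) (c s(.inr 2, .inl 0)) (c s(.inr 0, .inl 1)) (c s(.inl 4, .inr 2))
    (proper ?_ ?_ ?_ ?_) (proper ?_ ?_ ?_ ?_) (proper ?_ ?_ ?_ ?_) (proper ?_ ?_ ?_ ?_)
    (proper ?_ ?_ ?_ ?_) (proper ?_ ?_ ?_ ?_) (proper ?_ ?_ ?_ ?_) (proper ?_ ?_ ?_ ?_)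
    (paths (.inl 0) (.inr 0) ?_ (.inl 3) ?_ (.inr 2) ?_ (.inl 0) ?_ ?_)
    (paths (.inl 4) (.inr 2) ?_ (.inl 0) ?_ (.inr 0) ?_ (.inl 3) ?_ ?_)
    (paths (.inl 3) (.inr 2) ?_ (.inl 0) ?_ (.inr 0) ?_ (.inl 1) ?_ ?_)
  all_goals decide

theorem exists_biregular23_star_index_four :
    ∃ (a b : ℕ) (G : SimpleGraph (Fin a ⊕ Fin b)),
      G ≤ completeBipartiteGraph (Fin a) (Fin b) ∧
      (∀ x : Fin a, (G.neighborSet (Sum.inl x)).ncard = 2) ∧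
      (∀ y : Fin b, (G.neighborSet (Sum.inr y)).ncard = 3) ∧
      starChromaticIndex G = 4 :=
  ⟨6, 4, crossedPathsGraph, bipartiteGraphOfRel_le _, ncard_neighborSet_inl_crossedPathsGraph,
    ncard_neighborSet_inr_crossedPathsGraph,
    starChromaticIndex_eq_succ _ isStarEdgeColoring_crossedPathsColoring
      not_isStarEdgeColoring_crossedPathsGraph_fin_three⟩
end
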